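/- arXiv:1912.09138 — 10 statements merged into one kernel-verified Lean document; each statement's English description precedes it below -/
import Mathlib

section
/- There is no coanalytic base for a Ramsey ultrafilter: if U is a free ultrafilter on ℕ that is Ramsey, then no set X ⊆ 2^ℕ which is a base for U is coanalytic. -/
/-- Identify `x : ℕ → Bool` with the subset `{n | x n = true}` of `ℕ`. -/
def toSet (x : ℕ → Bool) : Set ℕ := {n | x n = true}

/-- A free ultrafilter is one containing all cofinite sets. -/
def IsFree (U : Ultrafilter ℕ) : Prop := ∀ s : Set ℕ, s.Finite → sᶜ ∈ U

/-- `X ⊆ 2^ℕ` is a base for the ultrafilter `U`. -/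
def IsBase (X : Set (ℕ → Bool)) (U : Ultrafilter ℕ) : Prop :=
  (∀ x ∈ X, toSet x ∈ U) ∧ ∀ u ∈ U, ∃ x ∈ X, toSet x ⊆ u

/-- `U` is Ramsey: every 2-coloring of pairs has a homogeneous set in `U`. -/
def IsRamsey (U : Ultrafilter ℕ) : Prop :=
  ∀ c : ℕ → ℕ → Bool, ∃ A ∈ U,
    ∀ m ∈ A, ∀ n ∈ A, ∀ m' ∈ A, ∀ n' ∈ A, m < n → m' < n' → c m n = c m' n'

/-!
By a theorem of Mathias, for a Ramsey ultrafilter `U` every analytic set `𝒜` of infinite subsets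
of `ℕ` is `U`-Ramsey: below any `A ∈ U` there is `B ∈ U` all of whose infinite subsets lie in `𝒜`,
or none of which do. Apply this to `𝒜`, the complement of a coanalytic base `X`. In the first case
the base element below `B` lies outside `X`. In the second case every infinite subset of `B` lies
in `X ⊆ U`, which is absurd because `B` splits into two disjoint infinite sets.

Mathias's theorem rests on a single fusion lemma, obtained from the diagonal-intersection form of
the Ramsey property. It shows that `U`-interiors are `U`-Ramsey (the Galvin–Prikry argument with
accepting and rejecting stems) and that `U`-null sets are closed under countable unions. Writing
the analytic set as the union over branches `f` of the images `𝒜(f ↾ n)` of cylinders, the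
`U`-closure of `𝒜(u)` differs from the union of the `U`-closures of its one-step extensions by a
null set. Off the union of these null sets every point of the `U`-closure of `𝒜(∅)` follows a
branch, and continuity identifies it with the image of that branch.
-/

open Set Filter PiNat

namespace RamseyUltrafilter

variable {U : Ultrafilter ℕ}

theorem IsFree.infinite_of_mem (hfree : IsFree U) {A : Set ℕ} (hA : A ∈ U) : A.Infinite :=
  fun hfin => U.compl_notMem_iff.2 hA (hfree A hfin)

/-- The diagonal-intersection form of selectivity. -/
def IsSelective (U : Ultrafilter ℕ) : Prop :=
  ∀ D : ℕ → Set ℕ, (∀ m, D m ∈ U) → ∃ H ∈ U, ∀ m ∈ H, ∀ n ∈ H, m < n → n ∈ D m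

theorem IsRamsey.isSelective (hR : IsRamsey U) (hfree : IsFree U) : IsSelective U := by
  classical
  intro D hD
  obtain ⟨A, hA, hhom⟩ := hR fun m n => decide (n ∈ D m)
  refine ⟨A, hA, fun m hm n hn hmn => ?_⟩
  obtain ⟨m₀, hm₀⟩ := U.nonempty_of_mem hA
  obtain ⟨n₀, ⟨hn₀A, hn₀D⟩, hn₀⟩ :=
    U.nonempty_of_mem (inter_mem (inter_mem hA (hD m₀)) (hfree _ (finite_Iic m₀)))
  have := hhom m hm n hn m₀ hm₀ n₀ hn₀A hmn (by simpa using hn₀)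
  simpa [hn₀D] using this

def IsInitialSegment (s : Finset ℕ) (x : Set ℕ) : Prop :=
  ↑s ⊆ x ∧ ∀ n ∈ x, n ∉ s → ∀ m ∈ s, m < n

namespace IsInitialSegment

variable {s t : Finset ℕ} {x : Set ℕ}

theorem total (hs : IsInitialSegment s x) (ht : IsInitialSegment t x) : s ⊆ t ∨ t ⊆ s := by
  by_contra! h
  obtain ⟨a, has, hat⟩ := Finset.not_subset.1 h.1
  obtain ⟨b, hbt, hbs⟩ := Finset.not_subset.1 h.2
  have := ht.2 a (hs.1 has) hat b hbt
  have := hs.2 b (ht.1 hbt) hbs a has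
  omega

theorem union (hs : IsInitialSegment s x) (ht : IsInitialSegment t x) :
    IsInitialSegment (s ∪ t) x := by
  rcases hs.total ht with hst | hts
  · rwa [Finset.union_eq_right.2 hst]
  · rwa [Finset.union_eq_left.2 hts]

theorem of_insert {a : ℕ} (h : IsInitialSegment (insert a t) x) (ha : ∀ m ∈ t, m < a) :
    IsInitialSegment t x := by
  refine ⟨fun m hm => h.1 (Finset.mem_insert_of_mem hm), fun n hn hnt m hm => ?_⟩
  by_cases hna : n = a
  · exact hna ▸ ha m hm
  · exact h.2 n hn (by simp [hna, hnt]) m (Finset.mem_insert_of_mem hm)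

theorem exists_insert (h : IsInitialSegment t x) (hx : x.Infinite) :
    ∃ n ∈ x, n ∉ t ∧ IsInitialSegment (insert n t) x := by
  have hne : (x \ ↑t).Nonempty := (hx.sdiff t.finite_toSet).nonempty
  obtain ⟨hnx, hnt⟩ := Nat.sInf_mem hne
  refine ⟨sInf (x \ ↑t), hnx, hnt, ?_, fun k hk hkn m hm => ?_⟩
  · simpa [Finset.coe_insert] using insert_subset hnx h.1
  · rw [Finset.mem_insert, not_or] at hkn
    rcases Finset.mem_insert.1 hm with rfl | hm
    · exact lt_of_le_of_ne (Nat.sInf_le ⟨hk, hkn.2⟩) (Ne.symm hkn.1)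
    · exact h.2 k hk hkn.2 m hm

end IsInitialSegment

noncomputable def truncate (x : Set ℕ) (e : ℕ) : Finset ℕ :=
  ((finite_Iic e).inter_of_right x).toFinset

theorem mem_truncate {x : Set ℕ} {e n : ℕ} : n ∈ truncate x e ↔ n ∈ x ∧ n ≤ e := by
  simp [truncate]

theorem isInitialSegment_truncate (x : Set ℕ) (e : ℕ) : IsInitialSegment (truncate x e) x :=
  ⟨fun _ hn => (mem_truncate.1 hn).1, fun n hn hne m hm => by
    have := (mem_truncate.1 hm).2
    have := mt (fun h => mem_truncate.2 ⟨hn, h⟩) hne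
    omega⟩

/-- The Mathias basic set `[s, B]`. -/
def mathiasSet (s : Finset ℕ) (B : Set ℕ) : Set (Set ℕ) :=
  {x | x.Infinite ∧ IsInitialSegment s x ∧ x ⊆ ↑s ∪ B}

theorem mathiasSet_mono {s : Finset ℕ} {B B' : Set ℕ} (h : B ⊆ B') :
    mathiasSet s B ⊆ mathiasSet s B' :=
  fun _ ⟨hx, hs, hxB⟩ => ⟨hx, hs, hxB.trans (union_subset_union_right _ h)⟩

theorem mem_mathiasSet_empty {B x : Set ℕ} : x ∈ mathiasSet ∅ B ↔ x.Infinite ∧ x ⊆ B := by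
  simp [mathiasSet, IsInitialSegment]

theorem mathiasSet_subset_of_mem {s t : Finset ℕ} {B x : Set ℕ} (hx : x ∈ mathiasSet s B)
    (hst : s ⊆ t) (ht : IsInitialSegment t x) : mathiasSet t B ⊆ mathiasSet s B := by
  rintro y ⟨hy, hty, hyB⟩
  refine ⟨hy, ⟨fun m hm => hty.1 (hst hm), fun n hn hns m hm => ?_⟩, fun n hn => ?_⟩
  · by_cases hnt : n ∈ t
    · exact hx.2.1.2 n (ht.1 hnt) hns m hm
    · exact hty.2 n hn hnt m (hst hm)
  · by_cases hnt : n ∈ t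
    · exact hx.2.2 (ht.1 hnt)
    · exact Or.inr ((hyB hn).resolve_left hnt)

theorem exists_fusion (hU : IsSelective U) {D : Finset ℕ → Set ℕ} (hD : ∀ t, D t ∈ U)
    (s₀ : Finset ℕ) {A : Set ℕ} (hA : A ∈ U) :
    ∃ H ∈ U, H ⊆ A ∧ ∀ x ∈ mathiasSet s₀ H, ∀ t, s₀ ⊆ t → IsInitialSegment t x →
      x ∈ mathiasSet t (D t) := by
  obtain ⟨H₀, hH₀, hdiag⟩ := hU (fun m => ⋂ t ∈ (Finset.range (m + 1)).powerset, D t)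
    fun m => (biInter_finset_mem _).2 fun t _ => hD t
  refine ⟨H₀ ∩ A ∩ D s₀, inter_mem (inter_mem hH₀ hA) (hD s₀), fun _ h => h.1.2, ?_⟩
  rintro x ⟨hx, hs₀x, hxH⟩ t hs₀t htx
  refine ⟨hx, htx, fun a hax => or_iff_not_imp_left.2 fun hat => ?_⟩
  have haH : a ∈ H₀ ∩ A ∩ D s₀ := (hxH hax).resolve_left fun h => hat (hs₀t h)
  by_cases hts : t ⊆ s₀
  · exact hts.antisymm hs₀t ▸ haH.2
  -- the largest element `m` of `t` lies in `H₀` and below `a`, and `t ⊆ [0, m]`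
  obtain ⟨e, het, hes⟩ := Finset.not_subset.1 hts
  obtain ⟨m, hmt, hm⟩ := t.exists_mem_eq_sup ⟨e, het⟩ id
  have hem : e ≤ m := (Finset.le_sup (f := id) het).trans_eq hm
  have hms : m ∉ s₀ := fun hms => by have := hs₀x.2 e (htx.1 het) hes m hms; omega
  have hmH : m ∈ H₀ := ((hxH (htx.1 hmt)).resolve_left hms).1.1
  refine mem_iInter₂.1 (hdiag m hmH a haH.1.1 (htx.2 a hax hat m hmt)) t ?_
  exact Finset.mem_powerset.2 fun k hk =>
    Finset.mem_range.2 (Nat.lt_succ_of_le ((Finset.le_sup (f := id) hk).trans_eq hm))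

def IsURamsey (U : Ultrafilter ℕ) (𝒴 : Set (Set ℕ)) : Prop :=
  ∀ s : Finset ℕ, ∀ A ∈ U, ∃ B ∈ U, B ⊆ A ∧
    (mathiasSet s B ⊆ 𝒴 ∨ Disjoint (mathiasSet s B) 𝒴)

def IsUNull (U : Ultrafilter ℕ) (𝒴 : Set (Set ℕ)) : Prop :=
  ∀ s : Finset ℕ, ∀ A ∈ U, ∃ B ∈ U, B ⊆ A ∧ Disjoint (mathiasSet s B) 𝒴

def uInterior (U : Ultrafilter ℕ) (𝒴 : Set (Set ℕ)) : Set (Set ℕ) :=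
  {x | ∃ s : Finset ℕ, ∃ B ∈ U, x ∈ mathiasSet s B ∧ mathiasSet s B ⊆ 𝒴}

theorem uInterior_subset (𝒴 : Set (Set ℕ)) : uInterior U 𝒴 ⊆ 𝒴 :=
  fun _ ⟨_, _, _, hx, hsub⟩ => hsub hx

theorem uInterior_mono {𝒴 𝒵 : Set (Set ℕ)} (h : 𝒴 ⊆ 𝒵) : uInterior U 𝒴 ⊆ uInterior U 𝒵 :=
  fun _ ⟨s, B, hB, hx, hsub⟩ => ⟨s, B, hB, hx, hsub.trans h⟩

theorem mathiasSet_subset_uInterior {s : Finset ℕ} {B : Set ℕ} {𝒴 : Set (Set ℕ)} (hB : B ∈ U)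
    (h : mathiasSet s B ⊆ 𝒴) : mathiasSet s B ⊆ uInterior U 𝒴 :=
  fun _ hx => ⟨s, B, hB, hx, h⟩

def Rejects (U : Ultrafilter ℕ) (𝒵 : Set (Set ℕ)) (A : Set ℕ) (t : Finset ℕ) : Prop :=
  ∀ B ∈ U, B ⊆ A → ¬mathiasSet t B ⊆ 𝒵

theorem Rejects.setOf_insert_mem (hU : IsSelective U) {𝒵 : Set (Set ℕ)} {A : Set ℕ} {t : Finset ℕ}
    (hA : A ∈ U) (ht : Rejects U 𝒵 A t) : {n | Rejects U 𝒵 A (insert n t)} ∈ U := by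
  classical
  by_contra hrej
  set S := {n | Rejects U 𝒵 A (insert n t)}ᶜ
  have hS : S ∈ U := U.compl_mem_iff_notMem.2 hrej
  have hC : ∀ n, ∃ C ∈ U, n ∈ S → mathiasSet (insert n t) C ⊆ 𝒵 := fun n => by
    by_cases hn : n ∈ S
    · obtain ⟨C, hC, -, hCZ⟩ : ∃ C ∈ U, C ⊆ A ∧ mathiasSet (insert n t) C ⊆ 𝒵 := by
        simpa [S, Rejects] using hn
      exact ⟨C, hC, fun _ => hCZ⟩
    · exact ⟨univ, univ_mem, fun h => absurd h hn⟩
  choose C hCU hCZ using hC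
  obtain ⟨H, hH, hHA, hfus⟩ := exists_fusion hU (D := fun t' => ⋂ k ∈ t', C k)
    (fun t' => (biInter_finset_mem t').2 fun k _ => hCU k) t (inter_mem hA hS)
  refine ht H hH (hHA.trans inter_subset_left) fun x hx => ?_
  obtain ⟨n, hnx, hnt, hins⟩ := hx.2.1.exists_insert hx.1
  have hnH : n ∈ H := (hx.2.2 hnx).resolve_left hnt
  have hxC := hfus x hx _ (Finset.subset_insert n t) hins
  exact hCZ n (hHA hnH).2 (mathiasSet_mono (biInter_subset_of_mem (Finset.mem_insert_self n t)) hxC)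

theorem Rejects.exists_forall_isInitialSegment (hU : IsSelective U) {𝒵 : Set (Set ℕ)} {A : Set ℕ}
    {s₀ : Finset ℕ} (hA : A ∈ U) (hs₀ : Rejects U 𝒵 A s₀) :
    ∃ H ∈ U, H ⊆ A ∧ ∀ x ∈ mathiasSet s₀ H, ∀ t, s₀ ⊆ t → IsInitialSegment t x →
      Rejects U 𝒵 A t := by
  classical
  obtain ⟨H, hH, hHA, hfus⟩ := exists_fusion hU (D := fun t => {n | Rejects U 𝒵 A t →
    Rejects U 𝒵 A (insert n t)}) (fun t => by
      by_cases ht : Rejects U 𝒵 A t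
      · simpa [ht] using ht.setOf_insert_mem hU hA
      · exact univ_mem' fun _ h => absurd h ht) s₀ hA
  refine ⟨H, hH, hHA, fun x hx t => ?_⟩
  induction t using Finset.induction_on_max with
  | empty => intro h _; rwa [Finset.subset_empty.1 h] at hs₀
  | insert a t hat ih =>
    intro hs₀t hins
    have hta : a ∉ t := fun h => lt_irrefl a (hat a h)
    have htx := hins.of_insert hat
    by_cases has₀ : a ∈ s₀
    · -- then `s₀ = insert a t`, since `t` and `s₀` are comparable initial segments of `x`
      have hts₀ : t ⊆ s₀ := (htx.total hx.2.1).resolve_right fun h => hta (h has₀)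
      rwa [(Finset.insert_subset has₀ hts₀).antisymm hs₀t]
    · have hsub := (Finset.subset_insert_iff_of_notMem has₀).1 hs₀t
      exact ((hfus x hx t hsub htx).2.2 (hins.1 (Finset.mem_insert_self a t))).resolve_left hta
        (ih hsub htx)

theorem isURamsey_uInterior (hU : IsSelective U) (𝒵 : Set (Set ℕ)) :
    IsURamsey U (uInterior U 𝒵) := by
  intro s₀ A hA
  by_cases hs₀ : Rejects U 𝒵 A s₀
  · obtain ⟨H, hH, hHA, hrej⟩ := hs₀.exists_forall_isInitialSegment hU hA
    refine ⟨H, hH, hHA, Or.inr (disjoint_left.2 fun x hx ⟨s, B, hB, hxs, hsZ⟩ => ?_)⟩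
    have ht := hxs.2.1.union hx.2.1
    refine hrej x hx _ Finset.subset_union_right ht (B ∩ A) (inter_mem hB hA) inter_subset_right ?_
    exact (mathiasSet_mono inter_subset_left).trans
      ((mathiasSet_subset_of_mem hxs Finset.subset_union_left ht).trans hsZ)
  · obtain ⟨B, hB, hBA, hBZ⟩ : ∃ B ∈ U, B ⊆ A ∧ mathiasSet s₀ B ⊆ 𝒵 := by
      simpa [Rejects] using hs₀
    exact ⟨B, hB, hBA, Or.inl (mathiasSet_subset_uInterior hB hBZ)⟩

theorem IsURamsey.compl {𝒴 : Set (Set ℕ)} (h : IsURamsey U 𝒴) : IsURamsey U 𝒴ᶜ := by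
  intro s A hA
  obtain ⟨B, hB, hBA, hsub | hdisj⟩ := h s A hA
  · exact ⟨B, hB, hBA, Or.inr (disjoint_compl_right.mono_left hsub)⟩
  · exact ⟨B, hB, hBA, Or.inl hdisj.subset_compl_right⟩

theorem IsUNull.mono {𝒴 𝒵 : Set (Set ℕ)} (h : IsUNull U 𝒵) (h𝒴 : 𝒴 ⊆ 𝒵) : IsUNull U 𝒴 :=
  fun s A hA => (h s A hA).imp fun _ ⟨hB, hBA, hdisj⟩ => ⟨hB, hBA, hdisj.mono_right h𝒴⟩

theorem IsUNull.iUnion (hU : IsSelective U) {ι : Type*} [Countable ι] {𝒩 : ι → Set (Set ℕ)}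
    (h : ∀ i, IsUNull U (𝒩 i)) : IsUNull U (⋃ i, 𝒩 i) := by
  rcases isEmpty_or_nonempty ι with hι | hι
  · exact fun s A hA => ⟨A, hA, subset_rfl, by simp⟩
  obtain ⟨e, he⟩ := exists_surjective_nat ι
  intro s₀ A hA
  have hC : ∀ t i, ∃ C ∈ U, Disjoint (mathiasSet t C) (𝒩 i) := fun t i =>
    (h i t univ univ_mem).imp fun _ ⟨hC, _, hdisj⟩ => ⟨hC, hdisj⟩
  choose C hCU hC using hC
  -- below a stem `t`, avoid the first `max t + 1` of the sets `𝒩 (e k)`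
  obtain ⟨H, hH, hHA, hfus⟩ := exists_fusion hU
    (D := fun t => ⋂ k ∈ Finset.range (t.sup id + 1), C t (e k))
    (fun t => (biInter_finset_mem _).2 fun k _ => hCU t (e k)) s₀ hA
  refine ⟨H, hH, hHA, disjoint_left.2 fun x hx hxN => ?_⟩
  obtain ⟨i, hxi⟩ := mem_iUnion.1 hxN
  obtain ⟨k, rfl⟩ := he i
  obtain ⟨n, ⟨hnx, hns₀⟩, hkn⟩ := (hx.1.sdiff s₀.finite_toSet).exists_gt k
  have hs₀t : s₀ ⊆ truncate x n := fun m hm =>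
    mem_truncate.2 ⟨hx.2.1.1 hm, (hx.2.1.2 n hnx hns₀ m hm).le⟩
  have hk : k ∈ Finset.range ((truncate x n).sup id + 1) := Finset.mem_range.2 <|
    Nat.lt_succ_of_le (hkn.le.trans (Finset.le_sup (f := id) (mem_truncate.2 ⟨hnx, le_rfl⟩)))
  exact disjoint_left.1 (hC _ (e k)) (mathiasSet_mono (biInter_subset_of_mem hk)
    (hfus x hx _ hs₀t (isInitialSegment_truncate x n))) hxi

theorem isURamsey_iff_isUNull_diff_uInterior (hU : IsSelective U) {𝒴 : Set (Set ℕ)} :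
    IsURamsey U 𝒴 ↔ IsUNull U (𝒴 \ uInterior U 𝒴) := by
  refine ⟨fun h s A hA => ?_, fun h s A hA => ?_⟩
  · obtain ⟨B, hB, hBA, hsub | hdisj⟩ := h s A hA
    · exact ⟨B, hB, hBA, disjoint_sdiff_right.mono_left (mathiasSet_subset_uInterior hB hsub)⟩
    · exact ⟨B, hB, hBA, hdisj.mono_right sdiff_subset⟩
  obtain ⟨B₁, hB₁, hB₁A, hsub | hdisj⟩ := isURamsey_uInterior hU 𝒴 s A hA
  · exact ⟨B₁, hB₁, hB₁A, Or.inl (hsub.trans (uInterior_subset 𝒴))⟩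
  obtain ⟨B₂, hB₂, hB₂B₁, hdisj₂⟩ := h s B₁ hB₁
  refine ⟨B₂, hB₂, hB₂B₁.trans hB₁A, Or.inr (disjoint_left.2 fun x hx hx𝒴 => ?_)⟩
  exact disjoint_left.1 hdisj₂ hx ⟨hx𝒴, disjoint_left.1 hdisj (mathiasSet_mono hB₂B₁ hx)⟩

theorem IsURamsey.iUnion (hU : IsSelective U) {ι : Type*} [Countable ι] {𝒴 : ι → Set (Set ℕ)}
    (h : ∀ i, IsURamsey U (𝒴 i)) : IsURamsey U (⋃ i, 𝒴 i) := by
  refine (isURamsey_iff_isUNull_diff_uInterior hU).2 <|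
    (IsUNull.iUnion hU fun i => (isURamsey_iff_isUNull_diff_uInterior hU).1 (h i)).mono ?_
  rintro x ⟨hx, hxint⟩
  obtain ⟨i, hxi⟩ := mem_iUnion.1 hx
  exact mem_iUnion.2 ⟨i, hxi, fun h => hxint (uInterior_mono (subset_iUnion 𝒴 i) h)⟩

def uClosure (U : Ultrafilter ℕ) (𝒴 : Set (Set ℕ)) : Set (Set ℕ) :=
  (uInterior U 𝒴ᶜ)ᶜ

theorem subset_uClosure (𝒴 : Set (Set ℕ)) : 𝒴 ⊆ uClosure U 𝒴 :=
  fun _ hx hint => uInterior_subset _ hint hx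

theorem isURamsey_uClosure (hU : IsSelective U) (𝒴 : Set (Set ℕ)) : IsURamsey U (uClosure U 𝒴) :=
  (isURamsey_uInterior hU 𝒴ᶜ).compl

theorem disjoint_uClosure {s : Finset ℕ} {B : Set ℕ} {𝒴 : Set (Set ℕ)} (hB : B ∈ U)
    (h : Disjoint (mathiasSet s B) 𝒴) : Disjoint (mathiasSet s B) (uClosure U 𝒴) :=
  disjoint_compl_right_iff_subset.2 (mathiasSet_subset_uInterior hB h.subset_compl_right)

theorem exists_agree_of_mem_uClosure {𝒴 : Set (Set ℕ)} {x : Set ℕ} (hx𝒴 : x ∈ uClosure U 𝒴)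
    (hx : x.Infinite) (k : ℕ) : ∃ y ∈ 𝒴, ∀ j < k, (j ∈ y ↔ j ∈ x) := by
  obtain ⟨e, hex, hke⟩ := hx.exists_gt k
  have hxe : x ∈ mathiasSet (truncate x e) univ :=
    ⟨hx, isInitialSegment_truncate x e, fun _ _ => Or.inr trivial⟩
  obtain ⟨y, hy, hy𝒴⟩ := not_subset.1 fun h => hx𝒴 ⟨_, univ, univ_mem, hxe, h⟩
  refine ⟨y, not_not.1 hy𝒴, fun j hj => ⟨fun hjy => ?_, fun hjx => ?_⟩⟩
  · by_contra hjx
    have hje := hy.2.1.2 j hjy (fun h => hjx (mem_truncate.1 h).1) e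
      (mem_truncate.2 ⟨hex, le_rfl⟩)
    omega
  · exact hy.2.1.1 (mem_truncate.2 ⟨hjx, by omega⟩)

theorem isUNull_uClosure_diff_iUnion (hU : IsSelective U) {ι : Type*} [Countable ι]
    {𝒴 : Set (Set ℕ)} {𝒵 : ι → Set (Set ℕ)} (h : 𝒴 ⊆ ⋃ i, 𝒵 i) :
    IsUNull U (uClosure U 𝒴 \ ⋃ i, uClosure U (𝒵 i)) := by
  intro s A hA
  obtain ⟨B, hB, hBA, hsub | hdisj⟩ :=
    IsURamsey.iUnion hU (fun i => isURamsey_uClosure hU (𝒵 i)) s A hA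
  · exact ⟨B, hB, hBA, disjoint_sdiff_right.mono_left hsub⟩
  refine ⟨B, hB, hBA, (disjoint_uClosure hB (hdisj.mono_right ?_)).mono_right sdiff_subset⟩
  exact h.trans (iUnion_mono fun i => subset_uClosure (𝒵 i))

theorem exists_forall_res {α : Type*} {P : List α → Prop} (h₀ : P [])
    (hstep : ∀ u, P u → ∃ a, P (a :: u)) : ∃ f : ℕ → α, ∀ n, P (res f n) := by
  choose a ha using hstep
  let p : ℕ → {u // P u} := fun n => Nat.rec ⟨[], h₀⟩ (fun _ u => ⟨a u.1 u.2 :: u.1, ha u.1 u.2⟩) n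
  have hp : ∀ n, (p n).1 = res (fun i => a (p i).1 (p i).2) n := by
    intro n
    induction n with
    | zero => rfl
    | succ n ih => exact congrArg (a (p n).1 (p n).2 :: ·) ih
  exact ⟨_, fun n => hp n ▸ (p n).2⟩

section Analytic

variable {g : (ℕ → ℕ) → ℕ → Bool}

def cylinderImage (g : (ℕ → ℕ) → ℕ → Bool) (u : List ℕ) : Set (Set ℕ) :=
  (toSet ∘ g) '' {f | res f u.length = u}

theorem cylinderImage_nil : cylinderImage g [] = range (toSet ∘ g) := by
  simp only [cylinderImage, List.length_nil, res_zero, ofPred_true, image_univ]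

theorem cylinderImage_subset_iUnion (u : List ℕ) :
    cylinderImage g u ⊆ ⋃ m, cylinderImage g (m :: u) := by
  rintro _ ⟨f, hf, rfl⟩
  exact mem_iUnion.2 ⟨f u.length, f, by simpa using hf, rfl⟩

theorem exists_cylinder_forall_apply_eq (hg : Continuous g) (f : ℕ → ℕ) (j : ℕ) :
    ∃ n, ∀ f' ∈ cylinder f n, g f' j = g f j := by
  have hopen : IsOpen ((fun f' => g f' j) ⁻¹' {g f j}) :=
    (isOpen_discrete _).preimage ((continuous_apply j).comp hg)
  obtain ⟨_, ⟨f₀, n, rfl⟩, hf, hsub⟩ :=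
    (isTopologicalBasis_cylinders _).exists_subset_of_mem_open (mem_singleton (g f j)) hopen
  exact ⟨n, fun f' hf' => hsub (mem_cylinder_iff_eq.1 hf ▸ hf')⟩

theorem toSet_eq_of_forall_mem_uClosure (hg : Continuous g) {f : ℕ → ℕ} {x : Set ℕ}
    (hx : x.Infinite) (h : ∀ n, x ∈ uClosure U (cylinderImage g (res f n))) :
    toSet (g f) = x := by
  ext j
  obtain ⟨n, hn⟩ := exists_cylinder_forall_apply_eq hg f j
  obtain ⟨_, ⟨f', hf', rfl⟩, hagree⟩ := exists_agree_of_mem_uClosure (h (max n (j + 1))) hx (j + 1)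
  have hff' : ∀ i < max n (j + 1), f' i = f i := res_eq_res.1 (by simpa using hf')
  rw [← hagree j j.lt_succ_self]
  show g f j = true ↔ g f' j = true
  rw [hn f' fun i hi => hff' i (lt_max_of_lt_left hi)]

theorem isURamsey_range (hU : IsSelective U) (hg : Continuous g) :
    IsURamsey U (range (toSet ∘ g)) := by
  intro s A hA
  set 𝒞 := fun u => uClosure U (cylinderImage g u)
  have hnull : IsUNull U (⋃ u, 𝒞 u \ ⋃ m, 𝒞 (m :: u)) :=
    IsUNull.iUnion hU fun u => isUNull_uClosure_diff_iUnion hU (cylinderImage_subset_iUnion u)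
  obtain ⟨B₁, hB₁, hB₁A, hsub | hdisj⟩ := isURamsey_uClosure hU (cylinderImage g []) s A hA
  · obtain ⟨B₂, hB₂, hB₂B₁, hdisj₂⟩ := hnull s B₁ hB₁
    refine ⟨B₂, hB₂, hB₂B₁.trans hB₁A, Or.inl fun x hx => ?_⟩
    have hstep : ∀ u, x ∈ 𝒞 u → ∃ m, x ∈ 𝒞 (m :: u) := fun u hu => by
      by_contra! hno
      exact disjoint_left.1 hdisj₂ hx (mem_iUnion.2 ⟨u, hu, by simpa using hno⟩)
    obtain ⟨f, hf⟩ := exists_forall_res (hsub (mathiasSet_mono hB₂B₁ hx)) hstep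
    exact ⟨f, toSet_eq_of_forall_mem_uClosure hg hx.1 hf⟩
  · refine ⟨B₁, hB₁, hB₁A, Or.inr (hdisj.mono_right ?_)⟩
    rw [← cylinderImage_nil]
    exact subset_uClosure _

theorem isURamsey_image_of_analyticSet (hU : IsSelective U) {𝒜 : Set (ℕ → Bool)}
    (h𝒜 : MeasureTheory.AnalyticSet 𝒜) : IsURamsey U (toSet '' 𝒜) := by
  rw [MeasureTheory.AnalyticSet] at h𝒜
  rcases h𝒜 with rfl | ⟨g, hg, rfl⟩
  · exact fun s A hA => ⟨A, hA, subset_rfl, Or.inr (by simp)⟩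
  · rw [← range_comp]
    exact isURamsey_range hU hg

end Analytic

theorem toSet_injective : Function.Injective toSet := fun _ _ h =>
  funext fun n => Bool.eq_iff_iff.2 (Set.ext_iff.1 h n)

theorem toSet_surjective : Function.Surjective toSet := fun w => by
  classical
  exact ⟨fun n => decide (n ∈ w), by ext; simp [toSet]⟩

theorem exists_infinite_subset_notMem {B : Set ℕ} (hB : B.Infinite) :
    ∃ w ⊆ B, w.Infinite ∧ w ∉ U := by
  have hinj := Nat.nth_injective hB
  let w (r : ℕ) := range fun k => Nat.nth (· ∈ B) (2 * k + r)
  have hwB (r : ℕ) : w r ⊆ B := range_subset_iff.2 fun _ => Nat.nth_mem_of_infinite hB _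
  have hw (r : ℕ) : (w r).Infinite :=
    infinite_range_of_injective fun _ _ hab => by have := hinj hab; omega
  have hdisj : Disjoint (w 0) (w 1) := disjoint_left.2 fun _ ⟨a, ha⟩ ⟨b, hb⟩ => by
    have := hinj (ha.trans hb.symm); omega
  by_cases h₀ : w 0 ∈ U
  · refine ⟨w 1, hwB 1, hw 1, fun h₁ => ?_⟩
    exact U.empty_notMem (hdisj.inter_eq ▸ inter_mem h₀ h₁)
  · exact ⟨w 0, hwB 0, hw 0, h₀⟩

end RamseyUltrafilter

open RamseyUltrafilter

/-- There is no coanalytic base for a Ramsey ultrafilter. -/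
theorem no_coanalytic_ramsey_base (U : Ultrafilter ℕ) (hfree : IsFree U)
    (hRamsey : IsRamsey U) (X : Set (ℕ → Bool)) (hbase : IsBase X U) :
    ¬ MeasureTheory.AnalyticSet Xᶜ := by
  intro hX
  obtain ⟨B, hB, -, hsub | hdisj⟩ :=
    isURamsey_image_of_analyticSet (hRamsey.isSelective hfree) hX ∅ univ univ_mem
  · obtain ⟨x, hxX, hxB⟩ := hbase.2 B hB
    have hx := mem_mathiasSet_empty.2 ⟨hfree.infinite_of_mem (hbase.1 x hxX), hxB⟩
    obtain ⟨y, hyX, hyx⟩ := hsub hx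
    exact hyX (toSet_injective hyx ▸ hxX)
  · obtain ⟨w, hwB, hw, hwU⟩ := exists_infinite_subset_notMem (hfree.infinite_of_mem hB)
    obtain ⟨y, rfl⟩ := toSet_surjective w
    have hyX : y ∈ X := by_contra fun hyX =>
      disjoint_left.1 hdisj (mem_mathiasSet_empty.2 ⟨hw, hwB⟩) (mem_image_of_mem toSet hyX)
    exact hwU (hbase.1 y hyX)
end

section
/- If U is a free ultrafilter on ℕ which is Σ¹₂, i.e. there is a coanalytic set C ⊆ (ℕ → ℕ) × 2^ℕ with U = {x : ∃ w, (w,x) ∈ C}, then the Fubini product U ⊗ U = {y ⊆ ℕ × ℕ : {n : {m : (n,m) ∈ y} ∈ U} ∈ U} is an ultrafilter on ℕ × ℕ which has a coanalytic base X ⊆ 2^(ℕ×ℕ). -/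
/-- Identify `x : ℕ × ℕ → Bool` with the subset `{p | x p = true}` of `ℕ × ℕ`. -/
def toSet2 (x : ℕ × ℕ → Bool) : Set (ℕ × ℕ) := {p | x p = true}

/-!
Given `u ∈ U ⊗ U`, the base element below `u` carries its own certificate of membership. Split
the set of `n` whose column `{m | (n, m) ∈ u}` is in `U` into a set `A ∈ U` and an infinite
remainder `K` (possible as `U` is free). Keep the columns of `u` over `A` in full and cut the
`i`-th column over `K` down to `z i + 1` points, where `z : ℕ → ℕ` packs, via `Nat.pair`, a
`C`-witness for `A` and one for every column over `A`. From any `y`, the set of infinite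
columns and the sequence `z` (read off the finite nonempty columns) are Borel functions of `y`,
so "all decoded witnesses lie in `C`" is a countable intersection of Borel preimages of the
coanalytic set `C`, hence coanalytic. Every `y` satisfying it lies in `U ⊗ U`, because its
infinite columns form a set in `U` and each of them is in `U`.
-/

open MeasureTheory Set

theorem Nat.nth_eq_iff_count {p : ℕ → Prop} [DecidablePred p] {i n : ℕ} :
    Nat.nth p i = n ↔ p n ∧ Nat.count p n = i ∨ n = 0 ∧ ∀ m, p m → Nat.count p m ≠ i := by
  by_cases h : ∀ hf : (Set.ofPred p).Finite, i < hf.toFinset.card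
  · have hmem := Nat.nth_mem i h
    have hcount := Nat.count_nth h
    constructor
    · rintro rfl
      exact Or.inl ⟨hmem, hcount⟩
    · rintro (⟨hn, rfl⟩ | ⟨-, hno⟩)
      · exact Nat.nth_count hn
      · exact absurd hcount (hno _ hmem)
  · simp only [not_forall, not_lt] at h
    obtain ⟨hf, hle⟩ := h
    have hno : ∀ m, p m → Nat.count p m ≠ i := fun m hm hc =>
      (Nat.count_lt_card hf hm).not_ge (hc ▸ hle)
    rw [Nat.nth_of_card_le hf hle]
    constructor
    · rintro rfl
      exact Or.inr ⟨rfl, hno⟩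
    · rintro (⟨hn, hc⟩ | ⟨rfl, -⟩)
      · exact absurd hc (hno n hn)
      · rfl

section Measurability

variable {α : Type*} [MeasurableSpace α]

theorem measurable_eval_nat {β : Type*} [MeasurableSpace β] {g : α → ℕ → β}
    (hg : ∀ n, Measurable fun a => g a n) {f : α → ℕ} (hf : Measurable f) :
    Measurable fun a => g a (f a) :=
  (measurable_from_prod_countable_left (f := fun q : α × ℕ => g q.1 q.2) hg).comp
    (measurable_id.prodMk hf)

theorem measurable_boolIndicator {ι : Type*} {s : α → Set ι}
    (hs : ∀ i, Measurable fun a => i ∈ s a) : Measurable fun a => (s a).boolIndicator :=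
  measurable_pi_lambda _ fun i => Measurable.ite (hs i).setOf measurable_const measurable_const

variable {p : α → ℕ → Prop}

theorem measurable_nat_count (hp : ∀ n, Measurable fun a => p a n)
    [∀ a, DecidablePred (p a)] (N : ℕ) : Measurable fun a => Nat.count (p a) N := by
  induction N with
  | zero => simp only [Nat.count_zero]; exact measurable_const
  | succ N ih =>
    simp only [Nat.count_succ]
    exact ih.add (Measurable.ite (hp N).setOf measurable_const measurable_const)

theorem measurable_nat_nth (hp : ∀ n, Measurable fun a => p a n) (i : ℕ) :
    Measurable fun a => Nat.nth (p a) i := by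
  classical
  have hcount : ∀ m, Measurable fun a => Nat.count (p a) m = i := fun m =>
    measurableSet_setOfPred.1 (measurable_nat_count hp m (measurableSet_singleton i))
  refine measurable_to_countable' fun n => ?_
  simp only [preimage, mem_singleton_iff, Nat.nth_eq_iff_count]
  exact (((hp n).and (hcount n)).or (measurable_const.and
    (Measurable.forall fun m => (hp m).imp (hcount m).not))).setOf

variable {s : α → Set ℕ} (hs : ∀ n, Measurable fun a => n ∈ s a)
include hs

theorem measurable_eq_coe_finset (t : Finset ℕ) : Measurable fun a => s a = ↑t := by
  simp only [Set.ext_iff, Finset.mem_coe]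
  exact Measurable.forall fun n => (hs n).iff measurable_const

theorem measurable_finite_apply : Measurable fun a => (s a).Finite := by
  have : (fun a => (s a).Finite) = fun a => ∃ t : Finset ℕ, s a = ↑t :=
    funext fun a => propext ⟨fun h => ⟨h.toFinset, h.coe_toFinset.symm⟩,
      fun ⟨t, ht⟩ => ht ▸ t.finite_toSet⟩
  exact this ▸ Measurable.exists (measurable_eq_coe_finset hs)

theorem measurable_ncard_apply : Measurable fun a => (s a).ncard := by
  refine measurable_to_countable' fun k => ?_
  have : (fun a => (s a).ncard) ⁻¹' {k} =
      {a | (∃ t : Finset ℕ, t.card = k ∧ s a = ↑t) ∨ k = 0 ∧ ¬(s a).Finite} := by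
    ext a
    simp only [mem_preimage, mem_singleton_iff, mem_ofPred_eq]
    constructor
    · rintro rfl
      by_cases hfin : (s a).Finite
      · exact Or.inl ⟨hfin.toFinset, (ncard_eq_toFinset_card _ hfin).symm, hfin.coe_toFinset.symm⟩
      · exact Or.inr ⟨Infinite.ncard hfin, hfin⟩
    · rintro (⟨t, rfl, hst⟩ | ⟨rfl, hfin⟩)
      · rw [hst, ncard_coe_finset]
      · exact Infinite.ncard hfin
  rw [this]
  exact ((Measurable.exists fun t => measurable_const.and (measurable_eq_coe_finset hs t)).or
    (measurable_const.and (measurable_finite_apply hs).not)).setOf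

end Measurability

namespace MeasureTheory.AnalyticSet

variable {X : Type*} [TopologicalSpace X]

theorem inter [T2Space X] {s t : Set X} (hs : AnalyticSet s) (ht : AnalyticSet t) :
    AnalyticSet (s ∩ t) := by
  rw [inter_eq_iInter]
  exact AnalyticSet.iInter fun b => by cases b <;> assumption

theorem union {s t : Set X} (hs : AnalyticSet s) (ht : AnalyticSet t) : AnalyticSet (s ∪ t) := by
  rw [union_eq_iUnion]
  exact AnalyticSet.iUnion fun b => by cases b <;> assumption

theorem preimage_of_measurable [PolishSpace X] [MeasurableSpace X] [BorelSpace X]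
    {Y : Type*} [TopologicalSpace Y] [T2Space Y] [SecondCountableTopology Y] [MeasurableSpace Y]
    [BorelSpace Y] {s : Set Y} (hs : AnalyticSet s) {f : X → Y} (hf : Measurable f) :
    AnalyticSet (f ⁻¹' s) := by
  rw [AnalyticSet] at hs
  rcases hs with rfl | ⟨g, hg, rfl⟩
  · simpa using analyticSet_empty
  · have : MeasurableSet {q : X × (ℕ → ℕ) | f q.1 = g q.2} :=
      measurableSet_eq_fun (hf.comp measurable_fst) (hg.measurable.comp measurable_snd)
    convert this.analyticSet.image_of_continuous continuous_fst
    ext x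
    simp [eq_comm]

end MeasureTheory.AnalyticSet

instance : PolishSpace (ℕ × ℕ → Bool) := {}

theorem toSet_boolIndicator (s : Set ℕ) : toSet s.boolIndicator = s :=
  s.preimage_boolIndicator_true

theorem toSet2_boolIndicator (s : Set (ℕ × ℕ)) : toSet2 s.boolIndicator = s :=
  s.preimage_boolIndicator_true

theorem measurable_mem_toSet2 (p : ℕ × ℕ) : Measurable fun x => p ∈ toSet2 x :=
  measurableSet_setOfPred.1 <| show MeasurableSet ((fun x : ℕ × ℕ → Bool => x p) ⁻¹' {true}) from
    measurable_pi_apply p (measurableSet_singleton true)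

theorem IsFree.infinite_of_mem {U : Ultrafilter ℕ} (hfree : IsFree U) {s : Set ℕ} (hs : s ∈ U) :
    s.Infinite :=
  fun hfin => U.compl_mem_iff_notMem.1 (hfree s hfin) hs

theorem Set.Infinite.exists_subset_infinite_diff {S : Set ℕ} (hS : S.Infinite) :
    ∃ E ⊆ S, E.Infinite ∧ (S \ E).Infinite := by
  have hinj := Nat.nth_injective hS
  have hmem := Nat.nth_mem_of_infinite hS
  refine ⟨range fun i => Nat.nth (· ∈ S) (2 * i), range_subset_iff.2 fun i => hmem _,
    infinite_range_of_injective fun i j h => by have := hinj h; omega, ?_⟩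
  refine (infinite_range_of_injective (f := fun i => Nat.nth (· ∈ S) (2 * i + 1))
    fun i j h => by have := hinj h; omega).mono ?_
  rintro _ ⟨i, rfl⟩
  exact ⟨hmem _, fun ⟨j, h⟩ => by have := hinj h; omega⟩

theorem IsFree.exists_mem_subset_infinite_diff {U : Ultrafilter ℕ} (hfree : IsFree U)
    {S : Set ℕ} (hS : S ∈ U) : ∃ A ∈ U, A ⊆ S ∧ (S \ A).Infinite := by
  obtain ⟨E, hES, hE, hSE⟩ := (hfree.infinite_of_mem hS).exists_subset_infinite_diff
  rcases U.mem_or_compl_mem E with hEU | hEU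
  · exact ⟨E, hEU, hES, hSE⟩
  · exact ⟨S \ E, Filter.inter_mem hS hEU, sdiff_subset, by rwa [sdiff_sdiff_cancel_left hES]⟩

namespace ColumnCode

def column (y : Set (ℕ × ℕ)) (n : ℕ) : Set ℕ := {m | (n, m) ∈ y}

def IsCodeColumn (y : Set (ℕ × ℕ)) (n : ℕ) : Prop :=
  (column y n).Finite ∧ (column y n).Nonempty

/-- The `i`-th code column, of size `k + 1`, codes `k`. -/
noncomputable def decode (y : Set (ℕ × ℕ)) (i : ℕ) : ℕ :=
  (column y (Nat.nth (IsCodeColumn y) i)).ncard - 1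

noncomputable def witness (y : Set (ℕ × ℕ)) (k : ℕ) : ℕ → ℕ := fun d => decode y (Nat.pair k d)

/-- Read through the `Σ¹₂` definition of `U`, membership says that the infinite columns of `y`
form a set in `U` and that each infinite column is in `U`. -/
def codedSet (C : Set ((ℕ → ℕ) × (ℕ → Bool))) : Set (Set (ℕ × ℕ)) :=
  {y | (witness y 0, {n | (column y n).Infinite}.boolIndicator) ∈ C ∧
    ∀ n, (column y n).Infinite → (witness y (n + 1), (column y n).boolIndicator) ∈ C}

theorem column_setOf (Y : ℕ → Set ℕ) (n : ℕ) : column {p | p.2 ∈ Y p.1} n = Y n := rfl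

theorem exists_decode_eq {A K : Set ℕ} (hAK : Disjoint A K) (hK : K.Infinite) {R : ℕ → Set ℕ}
    (hR : ∀ n ∈ A ∪ K, (R n).Infinite) (z : ℕ → ℕ) :
    ∃ y : Set (ℕ × ℕ), (∀ n, column y n ⊆ R n) ∧ (∀ n ∈ A, column y n = R n) ∧
      (∀ n ∉ A, (column y n).Finite) ∧ ∀ i, decode y i = z i := by
  classical
  have hF : ∀ n, ∃ F : Set ℕ, n ∈ K → F ⊆ R n ∧ F.Finite ∧
      F.ncard = z (Nat.count (· ∈ K) n) + 1 := fun n => by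
    by_cases hn : n ∈ K
    · exact ((hR n (Or.inr hn)).exists_subset_ncard_eq _).imp fun F hF _ => hF
    · exact ⟨∅, fun h => absurd h hn⟩
  choose F hF using hF
  set Y : ℕ → Set ℕ := fun n => if n ∈ A then R n else if n ∈ K then F n else ∅ with hY
  have hYA : ∀ n ∈ A, Y n = R n := fun n hn => if_pos hn
  have hYK : ∀ n ∈ K, Y n = F n := fun n hn => by
    simp only [hY, if_neg (hAK.notMem_of_mem_right hn), if_pos hn]
  have hYo : ∀ n ∉ A, n ∉ K → Y n = ∅ := fun n hA hK => by simp only [hY, if_neg hA, if_neg hK]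
  have hcode : IsCodeColumn {p | p.2 ∈ Y p.1} = (· ∈ K) := by
    ext n
    simp only [IsCodeColumn, column_setOf]
    by_cases hnA : n ∈ A
    · simp [hYA n hnA, hR n (Or.inl hnA), hAK.notMem_of_mem_left hnA]
    by_cases hnK : n ∈ K
    · obtain ⟨-, hfin, hcard⟩ := hF n hnK
      simp only [hYK n hnK, hfin, hnK, true_and, iff_true]
      exact nonempty_of_ncard_ne_zero (by omega)
    · simp [hYo n hnA hnK, hnK]
  refine ⟨{p | p.2 ∈ Y p.1}, fun n => ?_, hYA, fun n hnA => ?_, fun i => ?_⟩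
  · rw [column_setOf]
    by_cases hnA : n ∈ A
    · rw [hYA n hnA]
    by_cases hnK : n ∈ K
    · rw [hYK n hnK]; exact (hF n hnK).1
    · rw [hYo n hnA hnK]; exact empty_subset _
  · rw [column_setOf]
    by_cases hnK : n ∈ K
    · rw [hYK n hnK]; exact (hF n hnK).2.1
    · rw [hYo n hnA hnK]; exact finite_empty
  · have hi : Nat.nth (· ∈ K) i ∈ K := Nat.nth_mem_of_infinite hK i
    rw [decode, hcode, column_setOf, hYK _ hi, (hF _ hi).2.2,
      Nat.count_nth_of_infinite (p := (· ∈ K)) hK]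
    rfl

section Measurability

variable {α : Type*} [MeasurableSpace α] {y : α → Set (ℕ × ℕ)}
  (hy : ∀ p, Measurable fun a => p ∈ y a)
include hy

theorem measurable_mem_column (n m : ℕ) : Measurable fun a => m ∈ column (y a) n := hy (n, m)

theorem measurable_isCodeColumn (n : ℕ) : Measurable fun a => IsCodeColumn (y a) n :=
  (measurable_finite_apply (measurable_mem_column hy n)).and
    (Measurable.exists (measurable_mem_column hy n))

theorem measurable_decode (i : ℕ) : Measurable fun a => decode (y a) i :=
  (measurable_from_top (f := fun k : ℕ => k - 1)).comp <| measurable_eval_nat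
    (fun n => measurable_ncard_apply (measurable_mem_column hy n))
    (measurable_nat_nth (measurable_isCodeColumn hy) i)

theorem measurable_witness (k : ℕ) : Measurable fun a => witness (y a) k :=
  measurable_pi_lambda _ fun _ => measurable_decode hy _

end Measurability

theorem analyticSet_compl_preimage_codedSet {X : Type*} [TopologicalSpace X] [PolishSpace X]
    [MeasurableSpace X] [BorelSpace X] {C : Set ((ℕ → ℕ) × (ℕ → Bool))} (hC : AnalyticSet Cᶜ)
    {y : X → Set (ℕ × ℕ)} (hy : ∀ p, Measurable fun a => p ∈ y a) :
    AnalyticSet (y ⁻¹' codedSet C)ᶜ := by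
  have hinf : ∀ n, Measurable fun a => (column (y a) n).Infinite := fun n =>
    (measurable_finite_apply (measurable_mem_column hy n)).not
  have : (y ⁻¹' codedSet C)ᶜ =
      (fun a => (witness (y a) 0, {n | (column (y a) n).Infinite}.boolIndicator)) ⁻¹' Cᶜ ∪
        ⋃ n, {a | (column (y a) n).Infinite} ∩
          (fun a => (witness (y a) (n + 1), (column (y a) n).boolIndicator)) ⁻¹' Cᶜ := by
    ext a
    simp [codedSet, imp_iff_not_or]
  rw [this]
  refine (hC.preimage_of_measurable
    ((measurable_witness hy 0).prodMk (measurable_boolIndicator hinf))).union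
    (AnalyticSet.iUnion fun n => (hinf n).setOf.analyticSet.inter ?_)
  exact hC.preimage_of_measurable
    ((measurable_witness hy _).prodMk (measurable_boolIndicator (measurable_mem_column hy n)))

variable {U : Ultrafilter ℕ} {C : Set ((ℕ → ℕ) × (ℕ → Bool))}
  (hU : ∀ x : ℕ → Bool, toSet x ∈ U ↔ ∃ w : ℕ → ℕ, (w, x) ∈ C)
include hU

theorem mem_of_mem_codedSet {y : Set (ℕ × ℕ)} (hy : y ∈ codedSet C) :
    {n | column y n ∈ U} ∈ U := by
  have hA : {n | (column y n).Infinite} ∈ U := by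
    rw [← toSet_boolIndicator {n | (column y n).Infinite}]
    exact (hU _).2 ⟨_, hy.1⟩
  refine Filter.mem_of_superset hA fun n hn => ?_
  rw [mem_ofPred_eq, ← toSet_boolIndicator (column y n)]
  exact (hU _).2 ⟨_, hy.2 n hn⟩

theorem exists_subset_mem_codedSet (hfree : IsFree U) {u : Set (ℕ × ℕ)}
    (hu : {n | column u n ∈ U} ∈ U) : ∃ y ⊆ u, y ∈ codedSet C := by
  obtain ⟨A, hAU, hAS, hK⟩ := hfree.exists_mem_subset_infinite_diff hu
  have hR : ∀ n ∈ A ∪ ({n | column u n ∈ U} \ A), (column u n).Infinite := by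
    rw [union_sdiff_cancel hAS]
    exact fun n hn => hfree.infinite_of_mem hn
  obtain ⟨wA, hwA⟩ := (hU A.boolIndicator).1 (by rwa [toSet_boolIndicator])
  have hw : ∀ n, ∃ w, n ∈ A → (w, (column u n).boolIndicator) ∈ C := fun n => by
    by_cases hn : n ∈ A
    · obtain ⟨w, hw⟩ := (hU _).1 (by rw [toSet_boolIndicator]; exact hAS hn)
      exact ⟨w, fun _ => hw⟩
    · exact ⟨0, fun h => absurd h hn⟩
  choose w hw using hw
  let W : ℕ → ℕ → ℕ := fun k => match k with
    | 0 => wA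
    | n + 1 => w n
  obtain ⟨y, hyR, hyA, hyfin, hdec⟩ :=
    exists_decode_eq disjoint_sdiff_right hK hR fun i => W i.unpair.1 i.unpair.2
  have hinf : {n | (column y n).Infinite} = A := by
    ext n
    refine ⟨fun hn => ?_, fun hn => by rw [mem_ofPred_eq, hyA n hn]; exact hR n (Or.inl hn)⟩
    by_contra hnA
    exact hn (hyfin n hnA)
  have hwit : ∀ k, witness y k = W k := fun k => funext fun d => by
    simp only [witness, hdec, Nat.unpair_pair]
  refine ⟨y, fun p hp => hyR p.1 hp, ?_, fun n hn => ?_⟩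
  · rw [hwit, hinf]
    exact hwA
  · have hnA : n ∈ A := hinf ▸ hn
    rw [hwit, hyA n hnA]
    exact hw n hnA

end ColumnCode

open ColumnCode in
/-- If `U` is a free `Σ¹₂` ultrafilter on `ℕ` (i.e. the projection of a coanalytic
subset of `(ℕ → ℕ) × 2^ℕ`), then the Fubini product `U ⊗ U` is an ultrafilter on
`ℕ × ℕ` which has a coanalytic base. -/
theorem fubini_product_coanalytic_base (U : Ultrafilter ℕ) (hfree : IsFree U)
    (C : Set ((ℕ → ℕ) × (ℕ → Bool))) (hC : MeasureTheory.AnalyticSet Cᶜ)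
    (hU : ∀ x : ℕ → Bool, toSet x ∈ U ↔ ∃ w : ℕ → ℕ, (w, x) ∈ C) :
    ∃ V : Ultrafilter (ℕ × ℕ),
      (∀ y : Set (ℕ × ℕ), y ∈ V ↔ {n : ℕ | {m : ℕ | (n, m) ∈ y} ∈ U} ∈ U) ∧
      ∃ X : Set (ℕ × ℕ → Bool), MeasureTheory.AnalyticSet Xᶜ ∧
        (∀ x ∈ X, toSet2 x ∈ V) ∧ (∀ u ∈ V, ∃ x ∈ X, toSet2 x ⊆ u) := by
  refine ⟨U.bind fun n => U.map (Prod.mk n), fun y => Iff.rfl, toSet2 ⁻¹' codedSet C,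
    analyticSet_compl_preimage_codedSet hC measurable_mem_toSet2,
    fun x hx => mem_of_mem_codedSet hU hx, fun u hu => ?_⟩
  obtain ⟨y, hyu, hy⟩ := exists_subset_mem_codedSet hU hfree hu
  exact ⟨y.boolIndicator, by rwa [mem_preimage, toSet2_boolIndicator],
    by rwa [toSet2_boolIndicator]⟩
end

section
/- If a free ultrafilter U on ℕ has a coanalytic base, then U is Δ¹₂: both U and its complement in 2^ℕ are projections of coanalytic subsets of 2^ℕ × 2^ℕ, i.e. there are coanalytic sets C₀, C₁ ⊆ 2^ℕ × 2^ℕ with U = {u : ∃ x, (x,u) ∈ C₀} and 2^ℕ ∖ U = {u : ∃ x, (x,u) ∈ C₁}. -/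
open MeasureTheory Set in
/-- If a free ultrafilter on `ℕ` has a coanalytic base, then it is `Δ¹₂`: both the
ultrafilter (viewed as a subset of `2^ℕ`) and its complement are projections of
coanalytic subsets of `2^ℕ × 2^ℕ`. -/
theorem coanalytic_base_implies_delta12 (U : Ultrafilter ℕ) (hfree : IsFree U)
    (X : Set (ℕ → Bool)) (hX : MeasureTheory.AnalyticSet Xᶜ) (hbase : IsBase X U) :
    ∃ C₀ C₁ : Set ((ℕ → Bool) × (ℕ → Bool)),
      MeasureTheory.AnalyticSet C₀ᶜ ∧ MeasureTheory.AnalyticSet C₁ᶜ ∧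
      {u : ℕ → Bool | toSet u ∈ U} = {u : ℕ → Bool | ∃ x : ℕ → Bool, (x, u) ∈ C₀} ∧
      {u : ℕ → Bool | toSet u ∈ U}ᶜ = {u : ℕ → Bool | ∃ x : ℕ → Bool, (x, u) ∈ C₁} := by
  classical
  haveI : TopologicalSpace.IsCompletelyMetrizableSpace Bool := inferInstance
  haveI : PolishSpace Bool := inferInstance
  obtain ⟨hb1, hb2⟩ := hbase
  refine ⟨{p | p.1 ∈ X ∧ ∀ n, p.1 n = true → p.2 n = true},
          {p | p.1 ∈ X ∧ ∀ n, p.1 n = true → p.2 n = false}, ?_, ?_, ?_, ?_⟩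
  · have : {p : (ℕ → Bool) × (ℕ → Bool) | p.1 ∈ X ∧ ∀ n, p.1 n = true → p.2 n = true}ᶜ
        = (Prod.fst ⁻¹' Xᶜ) ∪
          (⋃ n, {p : (ℕ → Bool) × (ℕ → Bool) | p.1 n = true ∧ p.2 n ≠ true}) := by
      ext p
      by_cases hp : p.1 ∈ X <;>
        simp [hp, not_forall, Bool.not_eq_true, and_comm]
    rw [this, union_eq_iUnion]
    refine MeasureTheory.AnalyticSet.iUnion fun b => ?_
    cases b
    case false =>
      simp only [cond_false]
      refine (MeasurableSet.analyticSet ?_)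
      refine MeasurableSet.iUnion fun n => ?_
      have h1 : Measurable fun p : (ℕ → Bool) × (ℕ → Bool) => p.1 n :=
        (measurable_pi_apply n).comp measurable_fst
      have h2 : Measurable fun p : (ℕ → Bool) × (ℕ → Bool) => p.2 n :=
        (measurable_pi_apply n).comp measurable_snd
      exact (h1 (measurableSet_singleton true)).inter
        (h2 ((measurableSet_singleton _).compl))
    case true =>
      simp only [cond_true]
      exact hX.preimage continuous_fst
  · have : {p : (ℕ → Bool) × (ℕ → Bool) | p.1 ∈ X ∧ ∀ n, p.1 n = true → p.2 n = false}ᶜ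
        = (Prod.fst ⁻¹' Xᶜ) ∪
          (⋃ n, {p : (ℕ → Bool) × (ℕ → Bool) | p.1 n = true ∧ p.2 n ≠ false}) := by
      ext p
      by_cases hp : p.1 ∈ X <;>
        simp [hp, not_forall, Bool.not_eq_false, and_comm]
    rw [this, union_eq_iUnion]
    refine MeasureTheory.AnalyticSet.iUnion fun b => ?_
    cases b
    case false =>
      simp only [cond_false]
      refine (MeasurableSet.analyticSet ?_)
      refine MeasurableSet.iUnion fun n => ?_
      have h1 : Measurable fun p : (ℕ → Bool) × (ℕ → Bool) => p.1 n :=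
        (measurable_pi_apply n).comp measurable_fst
      have h2 : Measurable fun p : (ℕ → Bool) × (ℕ → Bool) => p.2 n :=
        (measurable_pi_apply n).comp measurable_snd
      exact (h1 (measurableSet_singleton true)).inter
        (h2 ((measurableSet_singleton _).compl))
    case true =>
      simp only [cond_true]
      exact hX.preimage continuous_fst
  · ext u
    simp only [mem_setOf_eq]
    constructor
    · intro hu
      obtain ⟨x, hxX, hxu⟩ := hb2 _ hu
      exact ⟨x, hxX, fun n hn => hxu hn⟩
    · rintro ⟨x, hxX, hsub⟩
      exact Filter.mem_of_superset (hb1 x hxX) (fun n hn => hsub n hn)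
  · ext u
    simp only [mem_compl_iff, mem_setOf_eq]
    rw [← Ultrafilter.compl_mem_iff_notMem]
    constructor
    · intro hu
      obtain ⟨x, hxX, hxu⟩ := hb2 _ hu
      refine ⟨x, hxX, fun n hn => ?_⟩
      have := hxu hn
      simp only [mem_compl_iff, toSet, mem_setOf_eq, Bool.not_eq_true] at this
      exact this
    · rintro ⟨x, hxX, h⟩
      refine Filter.mem_of_superset (hb1 x hxX) (fun n hn => ?_)
      simp only [mem_compl_iff, toSet, mem_setOf_eq] at hn ⊢
      simp [h n hn]
end

section
/- For every family 𝓑 of Borel subsets of 2^ℕ whose union is a free ultrafilter on ℕ, the least cardinality of a family of meager subsets of 2^ℕ covering 2^ℕ is at most the cardinality of 𝓑 (i.e. cov(meager) ≤ 𝔲_B). -/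
/-! A Baire-measurable subset `B` of a free ultrafilter `F ⊆ 2^ℕ` is meager: otherwise `B`, hence
`F`, is comeager in some basic cylinder `C`, and since `F` is invariant under finite modifications,
finitely many coordinate flips of the meager set `C \ F` cover `Fᶜ`, so `Fᶜ` is meager. But
flipping all coordinates is a homeomorphism exchanging `F` and `Fᶜ`, and `2^ℕ` is not meager.
So every member of `𝓑` is meager, `𝓑` is infinite (else `F = ⋃₀ 𝓑` would be Borel), and `𝓑`
together with its image under the global flip is a meager cover of `2^ℕ` of size `|𝓑|`. -/

open Cardinal

/-- `cov(meager)`: the least cardinality of a family of meager subsets of `2^ℕ`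
covering `2^ℕ`. -/
noncomputable def covMeager : Cardinal :=
  sInf {c : Cardinal | ∃ 𝓜 : Set (Set (ℕ → Bool)),
    (∀ A ∈ 𝓜, IsMeagre A) ∧ ⋃₀ 𝓜 = Set.univ ∧ c = #𝓜}

open Set Filter

section BaireMeasurable

variable {X : Type*} [TopologicalSpace X] {B : Set X}

theorem BaireMeasurableSet.exists_isOpen_nonempty_isMeagre_diff (hB : BaireMeasurableSet B)
    (hBm : ¬ IsMeagre B) : ∃ V, IsOpen V ∧ V.Nonempty ∧ IsMeagre (V \ B) := by
  obtain ⟨V, hV, hBV⟩ := hB.residualEq_isOpen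
  have hBV_diff : IsMeagre (B \ V) := mem_of_superset hBV.le fun _ hy ⟨hyB, hyV⟩ => hyV (hy hyB)
  have hVB_diff : IsMeagre (V \ B) :=
    mem_of_superset hBV.symm.le fun _ hy ⟨hyV, hyB⟩ => hyB (hy hyV)
  refine ⟨V, hV, nonempty_of_not_isMeagre fun hVm => hBm ?_, hVB_diff⟩
  exact (hBV_diff.union hVm).mono fun y hy => by by_cases hyV : y ∈ V <;> simp [hy, hyV]

theorem not_isMeagre_of_preimage_eq_compl [BaireSpace X] [Nonempty X] (h : X ≃ₜ X)
    {F : Set X} (hF : h ⁻¹' F = Fᶜ) : ¬ IsMeagre F := by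
  intro hFm
  have hFcm : IsMeagre Fᶜ := hF ▸ hFm.preimage_of_isOpenMap h.continuous h.isOpenMap
  exact not_isMeagre_of_isOpen isOpen_univ univ_nonempty (union_compl_self F ▸ hFm.union hFcm)

end BaireMeasurable

theorem exists_cylinder_subset {ι : Type*} {X : ι → Type*} [∀ i, TopologicalSpace (X i)]
    [∀ i, DiscreteTopology (X i)] {V : Set (∀ i, X i)} (hV : IsOpen V) {x : ∀ i, X i}
    (hx : x ∈ V) : ∃ I : Finset ι, {y | ∀ i ∈ I, y i = x i} ⊆ V := by
  obtain ⟨I, u, hu, hIV⟩ := isOpen_pi_iff.mp hV x hx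
  exact ⟨I, fun y hy => hIV fun i hi => hy i hi ▸ (hu i hi).2⟩

@[simps!]
def xorHomeomorph {ι : Type*} (e : ι → Bool) : (ι → Bool) ≃ₜ (ι → Bool) where
  toFun x i := xor (x i) (e i)
  invFun x i := xor (x i) (e i)
  left_inv x := funext fun i => by simp
  right_inv x := funext fun i => by simp
  continuous_toFun := continuous_pi fun i =>
    (continuous_of_discreteTopology (f := fun b => xor b (e i))).comp (continuous_apply i)
  continuous_invFun := continuous_pi fun i =>
    (continuous_of_discreteTopology (f := fun b => xor b (e i))).comp (continuous_apply i)

theorem isMeagre_compl_of_subset_of_not_isMeagre {ι : Type*} {F B : Set (ι → Bool)}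
    (hF : ∀ x y : ι → Bool, {i | x i ≠ y i}.Finite → x ∈ F → y ∈ F)
    (hB : BaireMeasurableSet B) (hBF : B ⊆ F) (hBm : ¬ IsMeagre B) : IsMeagre Fᶜ := by
  classical
  obtain ⟨V, hV, ⟨x, hxV⟩, hVB⟩ := hB.exists_isOpen_nonempty_isMeagre_diff hBm
  obtain ⟨I, hIV⟩ := exists_cylinder_subset hV hxV
  set C := {y : ι → Bool | ∀ i ∈ I, y i = x i}
  have hCF : IsMeagre (C \ F) := hVB.mono (sdiff_subset_sdiff hIV hBF)
  let flip (J : Finset ι) := xorHomeomorph fun i => decide (i ∈ J)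
  -- Flipping the coordinates in `I` where `y` and `x` differ moves `y` into `C`
  -- without leaving `Fᶜ`.
  have hcover : Fᶜ ⊆ ⋃ J ∈ I.powerset, flip J ⁻¹' (C \ F) := by
    intro y hyF
    let J := I.filter fun i => y i ≠ x i
    have hyJ : flip J y ∈ C := fun i hi => by
      by_cases hxy : y i = x i <;> cases hx : x i <;> simp_all [flip, J]
    have hJ : {i | flip J y i ≠ y i}.Finite :=
      J.finite_toSet.subset fun i hi =>
        by_contra fun hiJ => hi (by simp [flip, show i ∉ J from hiJ])
    exact mem_biUnion (Finset.mem_powerset.2 (I.filter_subset _))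
      ⟨hyJ, fun hy => hyF (hF _ y hJ hy)⟩
  refine (isMeagre_biUnion I.powerset.countable_toSet fun J _ => ?_).mono hcover
  exact hCF.preimage_of_isOpenMap (flip J).continuous (flip J).isOpenMap

theorem toSet_injective : Function.Injective toSet := fun _ _ h =>
  funext fun n => Bool.eq_iff_iff.mpr (Set.ext_iff.mp h n)

theorem symmDiff_toSet (x y : ℕ → Bool) : symmDiff (toSet x) (toSet y) = {n | x n ≠ y n} := by
  ext n
  cases hx : x n <;> cases hy : y n <;> simp [toSet, Set.mem_symmDiff, hx, hy]

theorem IsFree.symmDiff_mem_of_mem {U : Ultrafilter ℕ} (hU : IsFree U) {s t : Set ℕ}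
    (ht : t.Finite) (hs : s ∈ U) : symmDiff s t ∈ U :=
  mem_of_superset (inter_mem hs (hU t ht)) fun _ hn => Set.mem_symmDiff.mpr (Or.inl hn)

def ultrafilterSet (U : Ultrafilter ℕ) : Set (ℕ → Bool) := toSet ⁻¹' {s | s ∈ U}

theorem IsFree.mem_ultrafilterSet_of_finite {U : Ultrafilter ℕ} (hU : IsFree U)
    (x y : ℕ → Bool) (hxy : {n | x n ≠ y n}.Finite) (hx : x ∈ ultrafilterSet U) :
    y ∈ ultrafilterSet U := by
  have := hU.symmDiff_mem_of_mem (symmDiff_toSet x y ▸ hxy) hx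
  rwa [symmDiff_symmDiff_cancel_left] at this

theorem preimage_xorHomeomorph_true_ultrafilterSet (U : Ultrafilter ℕ) :
    xorHomeomorph (fun _ => true) ⁻¹' ultrafilterSet U = (ultrafilterSet U)ᶜ := by
  ext x
  have : toSet (xorHomeomorph (fun _ => true) x) = (toSet x)ᶜ := by ext n; simp [toSet]
  simp [ultrafilterSet, this, Ultrafilter.compl_mem_iff_notMem]

theorem not_isMeagre_ultrafilterSet (U : Ultrafilter ℕ) : ¬ IsMeagre (ultrafilterSet U) :=
  not_isMeagre_of_preimage_eq_compl _ (preimage_xorHomeomorph_true_ultrafilterSet U)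

theorem IsFree.isMeagre_of_subset_ultrafilterSet {U : Ultrafilter ℕ} (hU : IsFree U)
    {B : Set (ℕ → Bool)} (hB : BaireMeasurableSet B) (hBU : B ⊆ ultrafilterSet U) :
    IsMeagre B := by
  by_contra hBm
  have := isMeagre_compl_of_subset_of_not_isMeagre hU.mem_ultrafilterSet_of_finite hB hBU hBm
  refine not_isMeagre_of_preimage_eq_compl (xorHomeomorph fun _ => true) ?_ this
  rw [preimage_compl, preimage_xorHomeomorph_true_ultrafilterSet]

theorem covMeager_le_mk {𝓜 : Set (Set (ℕ → Bool))} (h𝓜 : ∀ A ∈ 𝓜, IsMeagre A)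
    (hcover : ⋃₀ 𝓜 = Set.univ) : covMeager ≤ #𝓜 :=
  csInf_le' ⟨𝓜, h𝓜, hcover, rfl⟩

/-- If the union of a family `𝓑` of Borel subsets of `2^ℕ` is a free ultrafilter,
then `cov(meager) ≤ |𝓑|`. -/
theorem covMeager_le_uB (𝓑 : Set (Set (ℕ → Bool))) (hBorel : ∀ B ∈ 𝓑, MeasurableSet B)
    (U : Ultrafilter ℕ) (hfree : IsFree U)
    (hunion : toSet '' ⋃₀ 𝓑 = {s : Set ℕ | s ∈ U}) :
    covMeager ≤ #𝓑 := by
  have h𝓑 : ⋃₀ 𝓑 = ultrafilterSet U := by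
    rw [ultrafilterSet, ← hunion, preimage_image_eq _ toSet_injective]
  have hmeagre (B) (hB : B ∈ 𝓑) : IsMeagre B :=
    hfree.isMeagre_of_subset_ultrafilterSet (hBorel B hB).baireMeasurableSet
      (h𝓑 ▸ subset_sUnion_of_mem hB)
  have hinf : 𝓑.Infinite := fun hfin => not_isMeagre_ultrafilterSet U <|
    hfree.isMeagre_of_subset_ultrafilterSet
      (h𝓑 ▸ (hfin.measurableSet_sUnion hBorel).baireMeasurableSet) subset_rfl
  let c := xorHomeomorph fun _ : ℕ => true
  calc covMeager ≤ #↥(𝓑 ∪ (c ⁻¹' ·) '' 𝓑) := by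
        refine covMeager_le_mk ?_ ?_
        · rintro A (hA | ⟨B, hB, rfl⟩)
          · exact hmeagre A hA
          · exact (hmeagre B hB).preimage_of_isOpenMap c.continuous c.isOpenMap
        · rw [sUnion_union, sUnion_image, ← preimage_iUnion₂, ← sUnion_eq_biUnion, h𝓑,
            preimage_xorHomeomorph_true_ultrafilterSet, union_compl_self]
    _ ≤ #𝓑 + #𝓑 := (mk_union_le _ _).trans (by gcongr; exact mk_image_le)
    _ = #𝓑 := add_eq_self (@aleph0_le_mk _ hinf.to_subtype)
end

section
/- For every family 𝓑 of Borel subsets of 2^ℕ whose union is a free ultrafilter on ℕ, the least cardinality of a family of Lebesgue-null subsets of ℝ covering ℝ is at most the cardinality of 𝓑 (i.e. cov(null) ≤ 𝔲_B). -/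
/-!
The binary-digit map `ℝ → 2^ℕ` pushes Lebesgue measure on `[0, 1)` forward to the coin-tossing
measure, which is invariant under all translations of the group `(ℕ → Bool, xor)`. A free
ultrafilter, viewed as a set `W ⊆ 2^ℕ`, is invariant under finitely supported translations and is
disjoint from its image under complementation `x ↦ 1 + x`. For a Borel `B ⊆ W`, the union of all
finitely supported translates of `B` is a Borel invariant subset of `W`, so by the zero-one law it
has measure `0` or `1`; measure `1` is impossible since it is disjoint from its complement image,
which has the same measure. Hence every `B ∈ 𝓑` is null, and the digit preimages of
`B ∪ (1 + B)`, `B ∈ 𝓑`, are Lebesgue-null sets covering `ℝ`: for each `x`, either `x` or `1 + x`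
lies in `W`.
-/

open Cardinal

/-- `cov(null)`: the least cardinality of a family of Lebesgue-null subsets of `ℝ`
covering `ℝ`. -/
noncomputable def covNull : Cardinal :=
  sInf {c : Cardinal | ∃ 𝓝 : Set (Set ℝ),
    (∀ A ∈ 𝓝, MeasureTheory.volume A = 0) ∧ ⋃₀ 𝓝 = Set.univ ∧ c = #𝓝}

open MeasureTheory
open Set PiNat Filter Function
open scoped ENNReal

namespace PiNat

theorem cylinder_inter_cylinder {E : ℕ → Type*} (x : ∀ n, E n) (m n : ℕ) :
    cylinder x m ∩ cylinder x n = cylinder x (max m n) :=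
  (subset_inter (cylinder_anti x (le_max_left m n)) (cylinder_anti x (le_max_right m n))).antisymm'
    fun _ ⟨hm, hn⟩ i hi => (lt_max_iff.1 hi).elim (hm i) (hn i)

theorem isPiSystem_cylinders {E : ℕ → Type*} :
    IsPiSystem {s : Set (∀ n, E n) | ∃ x n, s = cylinder x n} := by
  rintro _ ⟨x, m, rfl⟩ _ ⟨y, n, rfl⟩ ⟨z, hzx, hzy⟩
  rw [mem_cylinder_iff_eq] at hzx hzy
  exact ⟨z, max m n, by rw [← hzx, ← hzy, cylinder_inter_cylinder]⟩

theorem preimage_add_cylinder {G : Type*} [AddGroup G] (a x : ℕ → G) (n : ℕ) :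
    (a + ·) ⁻¹' cylinder x n = cylinder (-a + x) n := by
  ext y
  simp [eq_neg_add_iff_add_eq]

theorem exists_finsupp_preimage_add_cylinder {G : Type*} [AddGroup G] (x y : ℕ → G) (n : ℕ) :
    ∃ m : ℕ →₀ G, (⇑m + ·) ⁻¹' cylinder x n = cylinder y n := by
  classical
  refine ⟨Finsupp.indicator (Finset.range n) fun i _ => x i - y i, ?_⟩
  rw [preimage_add_cylinder, ← mem_cylinder_iff_eq]
  intro i hi
  simp [Finsupp.indicator_apply, hi]

end PiNat

section

variable {α : Type*} [TopologicalSpace α] [DiscreteTopology α] [Countable α] [MeasurableSpace α]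
  [BorelSpace α]

theorem measurableSet_cylinder (x : ℕ → α) (n : ℕ) : MeasurableSet (cylinder x n) :=
  (isOpen_cylinder _ x n).measurableSet

theorem MeasureTheory.Measure.ext_of_cylinder {μ ν : Measure (ℕ → α)} [IsFiniteMeasure μ]
    (h : ∀ x n, μ (PiNat.cylinder x n) = ν (PiNat.cylinder x n)) : μ = ν := by
  have hgen : (inferInstance : MeasurableSpace (ℕ → α)) =
      MeasurableSpace.generateFrom {s | ∃ (x : ℕ → α) (n : ℕ), s = PiNat.cylinder x n} :=
    (BorelSpace.measurable_eq).trans (isTopologicalBasis_cylinders _).borel_eq_generateFrom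
  refine ext_of_generate_finite _ hgen isPiSystem_cylinders ?_ ?_
  · rintro _ ⟨x, n, rfl⟩
    exact h x n
  · rcases isEmpty_or_nonempty (ℕ → α) with _ | ⟨⟨x⟩⟩
    · simp [Measure.eq_zero_of_isEmpty]
    · simpa using h x 0

end

section

variable {μ : Measure (ℕ → Bool)}

theorem measure_cylinder_eq_of_finsupp_invariant
    (hμ : ∀ (m : ℕ →₀ Bool) s, μ ((⇑m + ·) ⁻¹' s) = μ s) (x y : ℕ → Bool) (n : ℕ) :
    μ (cylinder x n) = μ (cylinder y n) := by
  obtain ⟨m, hm⟩ := exists_finsupp_preimage_add_cylinder x y n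
  rw [← hm, hμ]

theorem measure_cylinder_of_finsupp_invariant
    (hμ : ∀ (m : ℕ →₀ Bool) s, μ ((⇑m + ·) ⁻¹' s) = μ s) (x : ℕ → Bool) (n : ℕ) :
    μ (cylinder x n) = 2⁻¹ ^ n * μ univ := by
  induction n generalizing x with
  | zero => simp
  | succ n ih =>
    have hsplit : μ (cylinder x n) = 2 * μ (cylinder x (n + 1)) := by
      rw [← iUnion_cylinder_update x n, measure_iUnion, tsum_fintype, Fintype.sum_bool,
        measure_cylinder_eq_of_finsupp_invariant hμ (update x n true) x,
        measure_cylinder_eq_of_finsupp_invariant hμ (update x n false) x, two_mul]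
      · intro a b hab
        refine Set.disjoint_left.2 fun y hya hyb => hab ?_
        simpa using (hya n n.lt_succ_self).symm.trans (hyb n n.lt_succ_self)
      · exact fun _ => measurableSet_cylinder _ _
    rw [pow_succ', mul_assoc, ← ih x, hsplit, ← mul_assoc,
      ENNReal.inv_mul_cancel two_ne_zero ENNReal.ofNat_ne_top, one_mul]

theorem measure_eq_zero_or_one_of_finsupp_invariant [IsProbabilityMeasure μ] [μ.IsAddLeftInvariant]
    {A : Set (ℕ → Bool)} (hA : MeasurableSet A) (hinv : ∀ m : ℕ →₀ Bool, (⇑m + ·) ⁻¹' A = A) :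
    μ A = 0 ∨ μ A = 1 := by
  have hrestrict : μ.restrict A = μ A • μ := by
    have hμA : ∀ (m : ℕ →₀ Bool) s, μ.restrict A ((⇑m + ·) ⁻¹' s) = μ.restrict A s := by
      intro m s
      rw [Measure.restrict_apply' hA, Measure.restrict_apply' hA, ← hinv m, ← preimage_inter,
        hinv m, measure_preimage_add]
    refine Measure.ext_of_cylinder fun x n => ?_
    rw [measure_cylinder_of_finsupp_invariant hμA, Measure.smul_apply,
      measure_cylinder_of_finsupp_invariant (fun m s => measure_preimage_add μ m s)]
    simp [mul_comm]
  have hidem : μ A * μ A = μ A := by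
    simpa [hA, mul_comm] using (congrArg (· A) hrestrict).symm
  rcases eq_or_ne (μ A) 0 with h0 | h0
  · exact Or.inl h0
  · exact Or.inr ((ENNReal.mul_eq_left h0 (measure_ne_top μ A)).1 hidem)

theorem measure_eq_zero_of_subset_of_finsupp_invariant [IsProbabilityMeasure μ]
    [μ.IsAddLeftInvariant] {W B : Set (ℕ → Bool)}
    (hinv : ∀ m : ℕ →₀ Bool, (⇑m + ·) ⁻¹' W = W) (hdisj : Disjoint ((1 + ·) ⁻¹' W) W)
    (hB : MeasurableSet B) (hBW : B ⊆ W) : μ B = 0 := by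
  set B' := ⋃ m : ℕ →₀ Bool, (⇑m + ·) ⁻¹' B
  have hB'meas : MeasurableSet B' := .iUnion fun m => measurable_const_add _ hB
  have hB'W : B' ⊆ W := iUnion_subset fun m => hinv m ▸ preimage_mono hBW
  have hB'inv : ∀ m : ℕ →₀ Bool, (⇑m + ·) ⁻¹' B' = B' := by
    intro m
    simp only [B', preimage_iUnion, ← preimage_comp, comp_def, ← add_assoc, ← Finsupp.coe_add]
    exact (Equiv.addRight m).surjective.iUnion_comp fun k => (⇑k + ·) ⁻¹' B
  have hBB' : B ⊆ B' := fun x hx => mem_iUnion.2 ⟨0, by simpa using hx⟩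
  refine measure_mono_null hBB' ?_
  refine (measure_eq_zero_or_one_of_finsupp_invariant hB'meas hB'inv).resolve_right fun h1 => ?_
  have hdisj' : Disjoint ((1 + ·) ⁻¹' B') B' := hdisj.mono (preimage_mono hB'W) hB'W
  have : (2 : ℝ≥0∞) ≤ 1 := calc
    2 = μ ((1 + ·) ⁻¹' B') + μ B' := by rw [measure_preimage_add, h1, one_add_one_eq_two]
    _ = μ ((1 + ·) ⁻¹' B' ∪ B') := (measure_union hdisj' hB'meas).symm
    _ ≤ 1 := prob_le_one
  norm_num at this

end

/-- Binary digits of `Int.fract r`: digit `i` has weight `2⁻¹ ^ (i + 1)`. -/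
noncomputable def binaryDigits (r : ℝ) (i : ℕ) : Bool :=
  decide (⌊2 ^ (i + 1) * Int.fract r⌋₊ % 2 = 1)

theorem measurable_binaryDigits : Measurable binaryDigits :=
  measurable_pi_lambda _ fun _ =>
    (Measurable.of_discrete (f := fun k : ℕ => decide (k % 2 = 1))).comp
      (measurable_const.mul measurable_fract).nat_floor

theorem binaryDigits_fract (r : ℝ) : binaryDigits (Int.fract r) = binaryDigits r := by
  ext i
  simp [binaryDigits]

theorem Nat.floor_two_pow_succ_mul_div_two {K : Type*} [Semifield K] [LinearOrder K]
    [IsStrictOrderedRing K] [FloorSemiring K] (x : K) (n : ℕ) :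
    ⌊2 ^ (n + 1) * x⌋₊ / 2 = ⌊2 ^ n * x⌋₊ := by
  rw [← Nat.floor_div_ofNat, pow_succ]
  ring_nf

theorem exists_binaryDigits_mem_cylinder_iff (w : ℕ → Bool) (n : ℕ) :
    ∃ k < 2 ^ n, ∀ x ∈ Ico (0 : ℝ) 1, binaryDigits x ∈ cylinder w n ↔ ⌊2 ^ n * x⌋₊ = k := by
  induction n with
  | zero =>
    refine ⟨0, one_pos, fun x hx => ?_⟩
    simp [Nat.floor_eq_zero.2 hx.2]
  | succ n ih =>
    obtain ⟨k, hk, hiff⟩ := ih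
    refine ⟨2 * k + (w n).toNat, by cases w n <;> simp [pow_succ] <;> omega, fun x hx => ?_⟩
    have hdigit : binaryDigits x n = decide (⌊2 ^ (n + 1) * x⌋₊ % 2 = 1) := by
      rw [binaryDigits, Int.fract_eq_self.2 hx]
    rw [mem_cylinder_iff, Nat.forall_lt_succ_right, ← mem_cylinder_iff, hiff x hx, hdigit,
      ← Nat.floor_two_pow_succ_mul_div_two x n]
    cases w n <;> simp <;> omega

theorem exists_binaryDigits_preimage_cylinder_inter_Ico (w : ℕ → Bool) (n : ℕ) :
    ∃ k : ℕ, binaryDigits ⁻¹' cylinder w n ∩ Ico 0 1 = Ico ((k : ℝ) / 2 ^ n) ((k + 1) / 2 ^ n) := by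
  obtain ⟨k, hk, hiff⟩ := exists_binaryDigits_mem_cylinder_iff w n
  have hk' : (k : ℝ) + 1 ≤ 2 ^ n := by exact_mod_cast hk
  have h2n : (0 : ℝ) < 2 ^ n := by positivity
  refine ⟨k, ext fun x => ?_⟩
  rw [mem_inter_iff, mem_preimage, mem_Ico, mem_Ico, div_le_iff₀ h2n, lt_div_iff₀ h2n]
  constructor
  · rintro ⟨hd, hx⟩
    have := (Nat.floor_eq_iff (by positivity [hx.1])).1 ((hiff x hx).1 hd)
    constructor <;> linarith
  · rintro ⟨hkx, hxk⟩
    have hx : x ∈ Ico (0 : ℝ) 1 := ⟨by nlinarith [(k.cast_nonneg : (0 : ℝ) ≤ k)], by nlinarith⟩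
    have hfloor : ⌊2 ^ n * x⌋₊ = k :=
      (Nat.floor_eq_iff (by positivity [hx.1])).2 ⟨by linarith, by linarith⟩
    exact ⟨(hiff x hx).2 hfloor, hx⟩

noncomputable def binaryDigitMeasure : Measure (ℕ → Bool) :=
  (volume.restrict (Ico (0 : ℝ) 1)).map binaryDigits

instance : IsProbabilityMeasure binaryDigitMeasure :=
  have : IsProbabilityMeasure (volume.restrict (Ico (0 : ℝ) 1)) := ⟨by simp⟩
  Measure.isProbabilityMeasure_map measurable_binaryDigits.aemeasurable

theorem binaryDigitMeasure_apply {A : Set (ℕ → Bool)} (hA : MeasurableSet A) :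
    binaryDigitMeasure A = volume (binaryDigits ⁻¹' A ∩ Ico 0 1) := by
  rw [binaryDigitMeasure, Measure.map_apply measurable_binaryDigits hA,
    Measure.restrict_apply (measurable_binaryDigits hA)]

theorem binaryDigitMeasure_cylinder (w : ℕ → Bool) (n : ℕ) :
    binaryDigitMeasure (cylinder w n) = 2⁻¹ ^ n := by
  obtain ⟨k, hk⟩ := exists_binaryDigits_preimage_cylinder_inter_Ico w n
  rw [binaryDigitMeasure_apply (measurableSet_cylinder w n), hk, Real.volume_Ico, ← sub_div]
  simp [ENNReal.ofReal_inv_of_pos, ENNReal.ofReal_pow, ENNReal.inv_pow]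

instance : binaryDigitMeasure.IsAddLeftInvariant where
  map_add_left_eq_self a := Measure.ext_of_cylinder fun x n => by
    rw [Measure.map_apply (measurable_const_add a) (measurableSet_cylinder x n),
      preimage_add_cylinder, binaryDigitMeasure_cylinder, binaryDigitMeasure_cylinder]

theorem volume_fract_preimage_eq_zero {s : Set ℝ} (hs : volume (s ∩ Ico 0 1) = 0) :
    volume (Int.fract ⁻¹' s) = 0 := by
  rw [Int.preimage_fract]
  refine measure_iUnion_null fun m => ?_
  simpa [sub_eq_add_neg] using (measure_preimage_add_right volume (-(m : ℝ)) _).trans hs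

theorem volume_binaryDigits_preimage_eq_zero {A : Set (ℕ → Bool)} (hA : MeasurableSet A)
    (h : binaryDigitMeasure A = 0) : volume (binaryDigits ⁻¹' A) = 0 := by
  have : binaryDigits ⁻¹' A = Int.fract ⁻¹' (binaryDigits ⁻¹' A) := by
    ext r; simp [binaryDigits_fract]
  rw [this]
  exact volume_fract_preimage_eq_zero ((binaryDigitMeasure_apply hA).symm.trans h)

theorem toSet_injective_s4 : Injective toSet :=
  fun _ _ h => funext fun i => Bool.eq_iff_iff.2 (Set.ext_iff.1 h i)

theorem toSet_one_add (x : ℕ → Bool) : toSet (1 + x) = (toSet x)ᶜ := by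
  ext i
  simp only [toSet, mem_ofPred_eq, mem_compl_iff, Pi.add_apply, Pi.one_apply]
  cases x i <;> decide

theorem IsFree.le_cofinite {U : Ultrafilter ℕ} (hU : IsFree U) : (U : Filter ℕ) ≤ cofinite :=
  fun s hs => by simpa using hU sᶜ (mem_cofinite.1 hs)

theorem IsFree.preimage_finsupp_add {U : Ultrafilter ℕ} (hU : IsFree U) (m : ℕ →₀ Bool) :
    (⇑m + ·) ⁻¹' (toSet ⁻¹' {s | s ∈ U}) = toSet ⁻¹' {s | s ∈ U} := by
  ext x
  refine eventually_congr (hU.le_cofinite ?_)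
  filter_upwards [m.support.finite_toSet.compl_mem_cofinite] with i hi
  simp_all

theorem disjoint_preimage_one_add_toSet_preimage (U : Ultrafilter ℕ) :
    Disjoint ((1 + ·) ⁻¹' (toSet ⁻¹' {s | s ∈ U})) (toSet ⁻¹' {s | s ∈ U}) :=
  Set.disjoint_left.2 fun x hx hx' => by
    simp only [mem_preimage, mem_ofPred_eq, toSet_one_add, Ultrafilter.compl_mem_iff_notMem]
      at hx hx'
    exact hx hx'

theorem covNull_le_mk_of_iUnion_eq_univ {ι : Type} (f : ι → Set ℝ) (hnull : ∀ i, volume (f i) = 0)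
    (hcover : ⋃ i, f i = Set.univ) : covNull ≤ #ι :=
  (csInf_le' ⟨range f, forall_mem_range.2 hnull, by rwa [sUnion_range], rfl⟩ :
    covNull ≤ #(range f)).trans mk_range_le

/-- If the union of a family `𝓑` of Borel subsets of `2^ℕ` is a free ultrafilter,
then `cov(null) ≤ |𝓑|`. -/
theorem covNull_le_uB (𝓑 : Set (Set (ℕ → Bool))) (hBorel : ∀ B ∈ 𝓑, MeasurableSet B)
    (U : Ultrafilter ℕ) (hfree : IsFree U)
    (hunion : toSet '' ⋃₀ 𝓑 = {s : Set ℕ | s ∈ U}) :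
    covNull ≤ #𝓑 := by
  have hW : ⋃₀ 𝓑 = toSet ⁻¹' {s | s ∈ U} := by
    rw [← hunion, toSet_injective_s4.preimage_image]
  have hnull : ∀ B ∈ 𝓑, binaryDigitMeasure B = 0 := fun B hB =>
    measure_eq_zero_of_subset_of_finsupp_invariant hfree.preimage_finsupp_add
      (disjoint_preimage_one_add_toSet_preimage U) (hBorel B hB) (hW ▸ subset_sUnion_of_mem hB)
  refine covNull_le_mk_of_iUnion_eq_univ (fun B : 𝓑 => binaryDigits ⁻¹' (B ∪ (1 + ·) ⁻¹' B))
    (fun ⟨B, hB⟩ => ?_) (eq_univ_of_forall fun r => ?_)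
  · have hmeas := hBorel B hB
    exact volume_binaryDigits_preimage_eq_zero (hmeas.union (measurable_const_add 1 hmeas))
      (measure_union_null (hnull B hB) ((measure_preimage_add _ _ _).trans (hnull B hB)))
  · obtain ⟨B, hB, hr⟩ | ⟨B, hB, hr⟩ : binaryDigits r ∈ ⋃₀ 𝓑 ∨ 1 + binaryDigits r ∈ ⋃₀ 𝓑 := by
      simpa [hW, toSet_one_add] using U.mem_or_compl_mem (toSet (binaryDigits r))
    · exact mem_iUnion.2 ⟨⟨B, hB⟩, .inl hr⟩
    · exact mem_iUnion.2 ⟨⟨B, hB⟩, .inr hr⟩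
end

section
/- No analytic set is a base for a free ultrafilter: if X ⊆ 2^ℕ is analytic, then X is not a base for any free ultrafilter on ℕ. -/
/-!
Inside `2^ℕ`, the ultrafilter is the set `S = {y | toSet y ∈ U}`. If `X` is a base of `U`, then
`S` is the upward closure of `X`, hence analytic; its complement is the image of `S` under the
homeomorphism `y ↦ yᶜ`, hence analytic too, so `S` is Borel by Suslin's theorem and in particular
has the Baire property. As `U` is free, `S` is invariant under flipping finitely many coordinates,
so by the topological 0-1 law `S` is meagre or comeagre. Since `y ↦ yᶜ` exchanges `S` and `Sᶜ`,
both would then be meagre, contradicting the Baire category theorem.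
-/

open Set Filter MeasureTheory Topology
open scoped symmDiff

instance : OrderClosedTopology Bool := ⟨isClosed_discrete _⟩

-- Instance search does not find this from its two parent instances.
instance : PolishSpace (ℕ → Bool) := {}

theorem MeasureTheory.AnalyticSet.upperClosure {α : Type*} [TopologicalSpace α] [PolishSpace α]
    [Preorder α] [OrderClosedTopology α] {s : Set α} (hs : AnalyticSet s) :
    AnalyticSet (upperClosure s : Set α) := by
  obtain ⟨β, _, _, f, hf, rfl⟩ := analyticSet_iff_exists_polishSpace_range.1 hs
  have hclosed : IsClosed {p : β × α | f p.1 ≤ p.2} :=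
    isClosed_le (hf.comp continuous_fst) continuous_snd
  convert hclosed.analyticSet.image_of_continuous continuous_snd
  ext y
  simp [mem_upperClosure]

theorem MeasureTheory.AnalyticSet.baireMeasurableSet_of_compl {α : Type*} [TopologicalSpace α]
    [T2Space α] {s : Set α} (hs : AnalyticSet s) (hsc : AnalyticSet sᶜ) : BaireMeasurableSet s := by
  borelize α
  exact (hs.measurableSet_of_compl hsc).baireMeasurableSet

theorem isMeagre_sdiff_of_residualEq {α : Type*} [TopologicalSpace α] {s t : Set α} (h : s =ᵇ t) :
    IsMeagre (t \ s) :=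
  h.mem_iff.mono fun _ hx hxd => hxd.2 (hx.2 hxd.1)

section CantorSpace

variable {ι : Type*}

theorem continuous_symmDiff_left (m : ι → Bool) : Continuous (m ∆ · : (ι → Bool) → ι → Bool) :=
  continuous_pi fun i => (continuous_of_discreteTopology (f := (m i ∆ ·))).comp (continuous_apply i)

def symmDiffHomeomorph (m : ι → Bool) : (ι → Bool) ≃ₜ (ι → Bool) where
  toFun := (m ∆ ·)
  invFun := (m ∆ ·)
  left_inv := symmDiff_symmDiff_cancel_left m
  right_inv := symmDiff_symmDiff_cancel_left m
  continuous_toFun := continuous_symmDiff_left m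
  continuous_invFun := continuous_symmDiff_left m

theorem IsMeagre.preimage_symmDiff_left {s : Set (ι → Bool)} (hs : IsMeagre s) (m : ι → Bool) :
    IsMeagre ((m ∆ ·) ⁻¹' s) :=
  hs.preimage_of_isOpenMap (symmDiffHomeomorph m).continuous (symmDiffHomeomorph m).isOpenMap

theorem BaireMeasurableSet.isMeagre_or_isMeagre_compl_of_symmDiff_invariant
    {A : Set (ι → Bool)} (hA : BaireMeasurableSet A)
    (hinv : ∀ m : ι → Bool, {i | m i}.Finite → ∀ y, m ∆ y ∈ A ↔ y ∈ A) :
    IsMeagre A ∨ IsMeagre Aᶜ := by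
  classical
  refine or_iff_not_imp_left.2 fun hnm => ?_
  obtain ⟨u, hu, hAu⟩ := hA.residualEq_isOpen
  obtain ⟨z₀, hz₀⟩ : u.Nonempty := by
    refine nonempty_iff_ne_empty.2 fun hu₀ => hnm ?_
    simpa [hu₀] using isMeagre_sdiff_of_residualEq hAu.symm
  obtain ⟨I, v, hv, hIv⟩ := isOpen_pi_iff.1 hu z₀ hz₀
  set C : Set (ι → Bool) := {z | ∀ i ∈ I, z i = z₀ i}
  have hC : IsMeagre (C \ A) := (isMeagre_sdiff_of_residualEq hAu).mono <|
    sdiff_subset_sdiff_left fun z hz => hIv fun i hi => hz i hi ▸ (hv i hi).2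
  -- Flips supported in `I` carry the cylinder `C` onto every cylinder on `I`, and fix `A`.
  have hcover : Aᶜ ⊆ ⋃ J ∈ I.powerset, ((fun i => decide (i ∈ J)) ∆ ·) ⁻¹' (C \ A) := by
    intro z hz
    have hJ : I.filter (fun i => z i ≠ z₀ i) ∈ I.powerset :=
      Finset.mem_powerset.2 (Finset.filter_subset _ _)
    refine mem_biUnion (Finset.mem_coe.2 hJ) ⟨?_, ?_⟩
    · intro i hi
      cases hz : z i <;> cases hz₀ : z₀ i <;> simp [hi, hz, hz₀]
    · exact fun h => hz ((hinv _ (I.finite_toSet.subset fun i hi => by simp_all) z).1 h)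
  exact (isMeagre_biUnion I.powerset.countable_toSet fun J _ =>
    hC.preimage_symmDiff_left _).mono hcover

end CantorSpace

theorem toSet_symmDiff (x y : ℕ → Bool) : toSet (x ∆ y) = toSet x ∆ toSet y := by
  ext n
  cases hx : x n <;> cases hy : y n <;> simp [toSet, Set.mem_symmDiff, hx, hy]

theorem toSet_compl (x : ℕ → Bool) : toSet xᶜ = (toSet x)ᶜ := by
  ext n
  simp [toSet]

theorem toSet_subset_toSet {x y : ℕ → Bool} : toSet x ⊆ toSet y ↔ x ≤ y := by
  simp [toSet, Set.subset_def, Pi.le_def, Bool.le_iff_imp]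

theorem IsFree.symmDiff_mem_iff {U : Ultrafilter ℕ} (hU : IsFree U) {s : Set ℕ} (hs : s.Finite)
    (t : Set ℕ) : s ∆ t ∈ U ↔ t ∈ U := by
  have key : ∀ t ∈ U, s ∆ t ∈ U := fun t ht =>
    mem_of_superset (inter_mem ht (hU s hs)) fun _ hn => Or.inr hn
  exact ⟨fun h => symmDiff_symmDiff_cancel_left s t ▸ key _ h, key t⟩

theorem IsBase.setOf_toSet_mem_eq {X : Set (ℕ → Bool)} {U : Ultrafilter ℕ} (h : IsBase X U) :
    {y | toSet y ∈ U} = upperClosure X := by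
  ext y
  simp only [SetLike.mem_coe, mem_upperClosure, ← toSet_subset_toSet]
  exact ⟨h.2 _, fun ⟨x, hx, hxy⟩ => mem_of_superset (h.1 x hx) hxy⟩

/-- No analytic subset of `2^ℕ` is a base for a free ultrafilter on `ℕ`. -/
theorem no_analytic_ultrafilter_base (X : Set (ℕ → Bool))
    (hX : MeasureTheory.AnalyticSet X) (U : Ultrafilter ℕ) (hfree : IsFree U) :
    ¬ IsBase X U := by
  intro hbase
  set S : Set (ℕ → Bool) := {y | toSet y ∈ U}
  have hSc : (⊤ ∆ ·) ⁻¹' S = Sᶜ := by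
    ext y
    simp [S, toSet_compl, Ultrafilter.compl_mem_iff_notMem]
  have hSX : S = upperClosure X := hbase.setOf_toSet_mem_eq
  have hS : AnalyticSet S := hSX ▸ hX.upperClosure
  have hBM : BaireMeasurableSet S :=
    hS.baireMeasurableSet_of_compl (hSc ▸ hS.preimage (continuous_symmDiff_left ⊤))
  have hinv : ∀ m : ℕ → Bool, {i | m i}.Finite → ∀ y, m ∆ y ∈ S ↔ y ∈ S := fun m hm y => by
    change toSet (m ∆ y) ∈ U ↔ toSet y ∈ U
    rw [toSet_symmDiff]
    exact hfree.symmDiff_mem_iff hm _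
  have hmeagre : IsMeagre S ∧ IsMeagre Sᶜ := by
    rcases hBM.isMeagre_or_isMeagre_compl_of_symmDiff_invariant hinv with h | h
    · exact ⟨h, hSc ▸ h.preimage_symmDiff_left ⊤⟩
    · refine ⟨?_, h⟩
      simpa only [preimage_compl, hSc, compl_compl] using h.preimage_symmDiff_left ⊤
  exact not_isMeagre_of_isOpen isOpen_univ univ_nonempty <|
    (hmeagre.1.union hmeagre.2).mono (union_compl_self S).ge
end

section
/- There is a continuous function f : (ℕ → Bool) → (ℕ → Bool) such that for every z : ℕ → Bool and every ordinal α: if the relation E_z on ℕ defined by E_z(n,m) ↔ z(2^n · 3^m) = true is a strict linear order which is well-founded and has order type α, then E_{f(z)} is a strict linear order which is well-founded and has order type α + ω. -/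
/-!
Every decidable relation `r` on `ℕ` is coded by `k ↦ r (v₂ k) (v₃ k)`, where `vₚ` is the
`p`-adic valuation. Send `z` to the code of `Sum.Lex (E_z) (<)` on `ℕ ⊕ ℕ`, transported to `ℕ`
by the even/odd bijection: this order has type `α + ω`, and each bit of its code is either
constant or a single bit of `z`, so the map is continuous.
-/

/-- The relation on `ℕ` coded by `z : ℕ → Bool`: `E_z(n,m) ↔ z(2^n · 3^m) = true`. -/
def Erel (z : ℕ → Bool) : ℕ → ℕ → Prop := fun n m => z (2 ^ n * 3 ^ m) = true

open Ordinal

instance (z : ℕ → Bool) : DecidableRel (Erel z) := fun _ _ => inferInstanceAs (Decidable (_ = true))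

def relCode (r : ℕ → ℕ → Prop) [DecidableRel r] (k : ℕ) : Bool :=
  decide (r (padicValNat 2 k) (padicValNat 3 k))

theorem erel_relCode (r : ℕ → ℕ → Prop) [DecidableRel r] : Erel (relCode r) = r := by
  ext n m
  simp only [Erel, relCode, padicValNat_mul_pow_left n m (by decide : 2 ≠ 3),
    padicValNat_mul_pow_right n m (by decide : 3 ≠ 2), decide_eq_true_eq]

/-- `r` on the even numbers, followed by `<` on the odd numbers. -/
def addOmega (r : ℕ → ℕ → Prop) : ℕ → ℕ → Prop :=
  Equiv.natSumNatEquivNat.symm ⁻¹'o Sum.Lex r (· < ·)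

instance (r : ℕ → ℕ → Prop) [DecidableRel r] : DecidableRel (addOmega r) :=
  Order.Preimage.decidable _ _

instance (r : ℕ → ℕ → Prop) [IsWellOrder ℕ r] : IsWellOrder ℕ (addOmega r) :=
  (RelIso.preimage _ _).toRelEmbedding.isWellOrder

theorem type_addOmega (r : ℕ → ℕ → Prop) [IsWellOrder ℕ r] :
    type (addOmega r) = type r + ω := by
  unfold addOmega
  rw [type_preimage, type_sum_lex, type_nat_lt]

def addOmegaCode (z : ℕ → Bool) : ℕ → Bool :=
  relCode (addOmega (Erel z))

theorem continuous_decide_sumLex_erel (a b : ℕ ⊕ ℕ) :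
    Continuous fun z => decide (Sum.Lex (Erel z) (· < ·) a b) := by
  rcases a with i | i <;> rcases b with j | j
  · simpa only [Sum.lex_inl_inl, Erel, Bool.decide_eq_true] using continuous_apply _
  all_goals simp [continuous_const]

theorem continuous_addOmegaCode : Continuous addOmegaCode :=
  continuous_pi fun _ => by
    unfold addOmegaCode relCode addOmega
    exact continuous_decide_sumLex_erel _ _

/-- There is a continuous function `f : 2^ℕ → 2^ℕ` such that whenever `z` codes a
well-order of `ℕ` of order type `α`, `f z` codes a well-order of `ℕ` of order type
`α + ω`. (Here "strict well-founded linear order of type `α`" is expressed via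
`IsWellOrder` and `Ordinal.type`.) -/
theorem exists_continuous_plus_omega :
    ∃ f : (ℕ → Bool) → (ℕ → Bool), Continuous f ∧
      ∀ (z : ℕ → Bool) (α : Ordinal) (h : IsWellOrder ℕ (Erel z)),
        @Ordinal.type ℕ (Erel z) h = α →
        ∃ h' : IsWellOrder ℕ (Erel (f z)),
          @Ordinal.type ℕ (Erel (f z)) h' = α + Ordinal.omega0 := by
  refine ⟨addOmegaCode, continuous_addOmegaCode, fun z α _ hα => ?_⟩
  unfold addOmegaCode
  rw [erel_relCode, ← hα]
  exact ⟨inferInstance, type_addOmega _⟩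
end

section
/- Let y ⊆ ℕ and let (x_n) be a sequence of subsets of ℕ such that for every n the set y ∩ x_0 ∩ ⋯ ∩ x_n contains arbitrarily long arithmetic progressions. Then for every z : ℕ → Bool there is a sequence (i_n) of finite subsets of ℕ such that: (i) each i_n is an arithmetic progression of length at least n + 3 contained in y ∩ x_0 ∩ ⋯ ∩ x_n; (ii) max i_n < min i_{n+1} and i_n ∪ i_{n+1} is not an arithmetic progression; (iii) i_n has even cardinality if and only if z n = true. In particular, x = ⋃_n i_n satisfies x ⊆ y, x ∖ x_n is finite for every n, and x contains arbitrarily long arithmetic progressions. -/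
/-- `x ⊆ ℕ` contains arbitrarily long (finite) arithmetic progressions. -/
def ContainsAP (x : Set ℕ) : Prop :=
  ∀ k : ℕ, ∃ a, 1 ≤ a ∧ ∃ b, ∀ l < k, a * l + b ∈ x

/-- `s` is an arithmetic progression of length `m` (with common difference `≥ 1`). -/
def IsAPofLength (s : Set ℕ) (m : ℕ) : Prop :=
  ∃ a, 1 ≤ a ∧ ∃ b, s = (fun l => a * l + b) '' {l | l < m}

/-!
The progressions are built one after another. A long progression in `y ∩ x_0 ∩ ⋯ ∩ x_n`
with its first `M + 1` or `M + 2` terms discarded starts beyond any given bound `M`; one of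
the two choices also makes the gap between `M` and its first term differ from its common
difference. Taking `M = max i_{n-1}` and any prescribed length gives `i_n`. Then
`i_n ∪ i_{n+1}` is not a progression, because consecutive gaps of a progression are equal.
-/

open Finset

theorem exists_le_even_iff (n : ℕ) (p : Prop) : ∃ m, n ≤ m ∧ (Even m ↔ p) := by
  by_cases h : Even n ↔ p
  · exact ⟨n, le_rfl, h⟩
  · exact ⟨n + 1, n.le_succ, by rw [Nat.even_add_one]; tauto⟩

theorem exists_seq_forall_and_rel {α : Type*} (P : ℕ → α → Prop) (R : α → α → Prop)
    (h₀ : ∃ t, P 0 t) (hstep : ∀ n t, ∃ t', P (n + 1) t' ∧ R t t') :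
    ∃ f : ℕ → α, ∀ n, P n (f n) ∧ R (f n) (f (n + 1)) := by
  obtain ⟨t₀, ht₀⟩ := h₀
  choose g hgP hgR using hstep
  let f : ℕ → α := fun n => Nat.rec t₀ g n
  refine ⟨f, fun n => ⟨?_, hgR n (f n)⟩⟩
  cases n with
  | zero => exact ht₀
  | succ n => exact hgP n (f n)

theorem IsAPofLength.exists_consecutive_eq_add {s : Set ℕ} {m : ℕ} (hs : IsAPofLength s m) :
    ∃ d, ∀ u ∈ s, ∀ v ∈ s, u < v → (∀ t ∈ s, t ≤ u ∨ v ≤ t) → v = u + d := by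
  obtain ⟨a, ha, b, rfl⟩ := hs
  refine ⟨a, ?_⟩
  rintro _ ⟨l₁, -, rfl⟩ _ ⟨l₂, hl₂, rfl⟩ huv hgap
  dsimp only at huv ⊢
  have hl : l₁ < l₂ := by
    by_contra! hle
    have := Nat.mul_le_mul_left a hle
    omega
  obtain rfl : l₂ = l₁ + 1 := by
    by_contra hne
    have hmid := hgap _ ⟨l₁ + 1, show l₁ + 1 < m by grind, rfl⟩
    have hfar : a * (l₁ + 2) ≤ a * l₂ := Nat.mul_le_mul_left a (by omega)
    simp only [mul_add] at hmid hfar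
    omega
  ring

theorem ContainsAP.of_forall_exists_isAPofLength {s : Set ℕ}
    (h : ∀ k, ∃ t ⊆ s, ∃ m, k ≤ m ∧ IsAPofLength t m) : ContainsAP s := by
  intro k
  obtain ⟨t, hts, m, hkm, a, ha, b, rfl⟩ := h k
  exact ⟨a, ha, b, fun l hl => hts ⟨l, lt_of_lt_of_le hl hkm, rfl⟩⟩

theorem finite_iUnion_diff_of_subset_biInter {α : Type*} {s : ℕ → Set α} {x : ℕ → Set α}
    (hfin : ∀ n, (s n).Finite) (hs : ∀ n, s n ⊆ ⋂ k ≤ n, x k) (n : ℕ) :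
    ((⋃ m, s m) \ x n).Finite := by
  refine ((Set.finite_lt_nat n).biUnion fun m _ => hfin m).subset ?_
  rintro t ⟨ht, htx⟩
  obtain ⟨m, htm⟩ := Set.mem_iUnion.1 ht
  refine Set.mem_biUnion (show m < n from lt_of_not_ge fun hnm => htx ?_) htm
  exact Set.mem_iInter₂.1 (hs m htm) n hnm

structure ArithProg where
  diff : ℕ
  start : ℕ
  len : ℕ

namespace ArithProg

variable (P : ArithProg)

def toFinset : Finset ℕ := (range P.len).image fun l => P.diff * l + P.start

def last : ℕ := P.diff * (P.len - 1) + P.start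

variable {P}

theorem mem_toFinset {t : ℕ} : t ∈ P.toFinset ↔ ∃ l < P.len, P.diff * l + P.start = t := by
  simp [toFinset]

theorem coe_toFinset :
    (P.toFinset : Set ℕ) = (fun l => P.diff * l + P.start) '' {l | l < P.len} := by
  ext t
  simp [mem_toFinset]

theorem isAPofLength (h : 1 ≤ P.diff) : IsAPofLength P.toFinset P.len :=
  ⟨P.diff, h, P.start, coe_toFinset⟩

theorem card_toFinset (h : 1 ≤ P.diff) : P.toFinset.card = P.len := by
  refine (card_image_of_injective _ fun l₁ l₂ hl => ?_).trans (card_range _)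
  exact Nat.eq_of_mul_eq_mul_left h (Nat.add_right_cancel hl)

theorem start_le {t : ℕ} (ht : t ∈ P.toFinset) : P.start ≤ t := by
  obtain ⟨l, -, rfl⟩ := mem_toFinset.1 ht
  omega

theorem le_last {t : ℕ} (ht : t ∈ P.toFinset) : t ≤ P.last := by
  obtain ⟨l, hl, rfl⟩ := mem_toFinset.1 ht
  have := Nat.mul_le_mul_left P.diff (Nat.le_sub_one_of_lt hl)
  unfold last
  omega

theorem diff_add_start_le {t : ℕ} (ht : t ∈ P.toFinset) (hne : t ≠ P.start) :
    P.diff + P.start ≤ t := by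
  obtain ⟨l, -, rfl⟩ := mem_toFinset.1 ht
  have hl : 1 ≤ l := Nat.one_le_iff_ne_zero.2 (by rintro rfl; simp at hne)
  have := Nat.mul_le_mul_left P.diff hl
  omega

theorem start_mem (h : 0 < P.len) : P.start ∈ P.toFinset :=
  mem_toFinset.2 ⟨0, h, by simp⟩

theorem last_mem (h : 0 < P.len) : P.last ∈ P.toFinset :=
  mem_toFinset.2 ⟨P.len - 1, by omega, rfl⟩

theorem diff_add_start_mem (h : 1 < P.len) : P.diff + P.start ∈ P.toFinset :=
  mem_toFinset.2 ⟨1, h, by simp⟩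

theorem not_isAPofLength_union {Q : ArithProg} (hP : 0 < P.len) (hQ : 1 < Q.len)
    (hQdiff : 1 ≤ Q.diff) (hlt : P.last < Q.start) (hne : Q.start ≠ P.last + Q.diff) (m : ℕ) :
    ¬ IsAPofLength ↑(P.toFinset ∪ Q.toFinset) m := by
  intro hs
  obtain ⟨d, hd⟩ := hs.exists_consecutive_eq_add
  have hgap₁ : Q.start = P.last + d := by
    refine hd _ (mem_union_left _ (last_mem hP)) _ (mem_union_right _ (start_mem (by omega)))
      hlt fun t ht => ?_
    rcases mem_union.1 ht with ht | ht
    · exact Or.inl (le_last ht)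
    · exact Or.inr (start_le ht)
  have hgap₂ : Q.diff + Q.start = Q.start + d := by
    refine hd _ (mem_union_right _ (start_mem (by omega))) _
      (mem_union_right _ (diff_add_start_mem hQ)) (by omega) fun t ht => ?_
    rcases mem_union.1 ht with ht | ht
    · exact Or.inl ((le_last ht).trans hlt.le)
    · by_cases h : t = Q.start
      · exact Or.inl h.le
      · exact Or.inr (diff_add_start_le ht h)
  omega

end ArithProg

theorem ContainsAP.exists_arithProg {S : Set ℕ} (hS : ContainsAP S) (m M : ℕ) :
    ∃ P : ArithProg, 1 ≤ P.diff ∧ P.len = m ∧ M < P.start ∧ P.start ≠ M + P.diff ∧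
      ↑P.toFinset ⊆ S := by
  obtain ⟨a, ha, b, hb⟩ := hS (M + 2 + m)
  have hsub : ∀ j ≤ 2, ↑(ArithProg.toFinset ⟨a, a * (M + j) + b, m⟩) ⊆ S := by
    intro j hj t ht
    obtain ⟨l, hl, rfl⟩ := ArithProg.mem_toFinset.1 ht
    rw [show a * l + (a * (M + j) + b) = a * (l + (M + j)) + b by ring]
    exact hb _ (by dsimp only at hl; omega)
  have hM : M + 1 ≤ a * (M + 1) := Nat.le_mul_of_pos_left _ ha
  by_cases hc : a * (M + 1) + b = M + a
  · refine ⟨⟨a, a * (M + 2) + b, m⟩, ha, rfl, ?_, ?_, hsub 2 le_rfl⟩ <;>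
      dsimp only <;> rw [show a * (M + 2) = a * (M + 1) + a by ring] <;> omega
  · exact ⟨⟨a, a * (M + 1) + b, m⟩, ha, rfl, by dsimp only; omega, hc, hsub 1 (by norm_num)⟩

theorem exists_arithProg_seq {S : ℕ → Set ℕ} (hS : ∀ n, ContainsAP (S n)) (L : ℕ → ℕ) :
    ∃ P : ℕ → ArithProg, (∀ n, 1 ≤ (P n).diff) ∧ (∀ n, (P n).len = L n) ∧
      (∀ n, ↑(P n).toFinset ⊆ S n) ∧ (∀ n, (P n).last < (P (n + 1)).start) ∧
      ∀ n, (P (n + 1)).start ≠ (P n).last + (P (n + 1)).diff := by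
  obtain ⟨P, hP⟩ := exists_seq_forall_and_rel
    (fun n (Q : ArithProg) => 1 ≤ Q.diff ∧ Q.len = L n ∧ ↑Q.toFinset ⊆ S n)
    (fun (Q Q' : ArithProg) => Q.last < Q'.start ∧ Q'.start ≠ Q.last + Q'.diff)
    (by
      obtain ⟨Q, hdiff, hlen, -, -, hsub⟩ := (hS 0).exists_arithProg (L 0) 0
      exact ⟨Q, hdiff, hlen, hsub⟩)
    (fun n Q => by
      obtain ⟨Q', hdiff, hlen, hlt, hne, hsub⟩ := (hS (n + 1)).exists_arithProg (L (n + 1)) Q.last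
      exact ⟨Q', ⟨hdiff, hlen, hsub⟩, hlt, hne⟩)
  exact ⟨P, fun n => (hP n).1.1, fun n => (hP n).1.2.1, fun n => (hP n).1.2.2,
    fun n => (hP n).2.1, fun n => (hP n).2.2⟩

/-- Given `y` and a sequence `(x_n)` such that each `y ∩ x_0 ∩ ⋯ ∩ x_n` contains
arbitrarily long arithmetic progressions, for any `z : ℕ → Bool` one can find a
sequence `(i_n)` of finite arithmetic progressions, of length at least `n + 3`,
inside `y ∩ x_0 ∩ ⋯ ∩ x_n`, separated and not merging into longer progressions,
with `|i_n|` even iff `z n = true`; the union is then a pseudointersection of the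
`x_n` inside `y` containing arbitrarily long arithmetic progressions. -/
theorem exists_ap_sequence (y : Set ℕ) (x : ℕ → Set ℕ)
    (h : ∀ n : ℕ, ContainsAP (y ∩ ⋂ k ≤ n, x k)) (z : ℕ → Bool) :
    ∃ i : ℕ → Finset ℕ,
      (∀ n : ℕ, ∃ m, n + 3 ≤ m ∧ IsAPofLength (↑(i n)) m ∧
        (↑(i n) : Set ℕ) ⊆ y ∩ ⋂ k ≤ n, x k) ∧
      (∀ n : ℕ, ∀ p ∈ i n, ∀ q ∈ i (n + 1), p < q) ∧
      (∀ n : ℕ, ¬ ∃ m, IsAPofLength (↑(i n ∪ i (n + 1))) m) ∧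
      (∀ n : ℕ, Even (i n).card ↔ z n = true) ∧
      (⋃ n, (i n : Set ℕ)) ⊆ y ∧
      (∀ n : ℕ, ((⋃ m, (i m : Set ℕ)) \ x n).Finite) ∧
      ContainsAP (⋃ n, (i n : Set ℕ)) := by
  choose L hL hLz using fun n => exists_le_even_iff (n + 3) (z n = true)
  obtain ⟨P, hdiff, hlen, hsub, hlt, hne⟩ := exists_arithProg_seq h L
  have hlen' : ∀ n, n + 3 ≤ (P n).len := fun n => hlen n ▸ hL n
  refine ⟨fun n => (P n).toFinset, fun n => ⟨_, hlen' n, (P n).isAPofLength (hdiff n), hsub n⟩,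
    fun n p hp q hq => ((P n).le_last hp).trans_lt ((hlt n).trans_le ((P (n + 1)).start_le hq)),
    fun n ⟨m, hm⟩ => ArithProg.not_isAPofLength_union (by grind) (by grind) (hdiff (n + 1))
      (hlt n) (hne n) m hm,
    fun n => by rw [(P n).card_toFinset (hdiff n), hlen, hLz],
    Set.iUnion_subset fun n => (hsub n).trans Set.inter_subset_left,
    finite_iUnion_diff_of_subset_biInter (fun n => (P n).toFinset.finite_toSet)
      (fun n => (hsub n).trans Set.inter_subset_right),
    ContainsAP.of_forall_exists_isAPofLength fun k =>
      ⟨_, Set.subset_iUnion _ k, _, by grind, (P k).isAPofLength (hdiff k)⟩⟩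
end

section
/- A free ultrafilter U on ℕ is a P-point if and only if Player I has no winning strategy in the game G(U). Precisely: U is a P-point if and only if for every strategy σ for Player I (a function assigning to each finite sequence ⟨a₀,…,a_{n-1}⟩ of finite subsets of ℕ a set σ(⟨a₀,…,a_{n-1}⟩) ∈ U) there exists a sequence (a_n) of nonempty finite subsets of ℕ with a_n ⊆ σ(⟨a₀,…,a_{n-1}⟩) for every n and ⋃_n a_n ∈ U. -/
/-- `U` is a P-point: every countable subfamily of `U` has a pseudointersection
in `U`. -/
def IsPPoint (U : Ultrafilter ℕ) : Prop :=
  ∀ F : Set (Set ℕ), F.Countable → (∀ y ∈ F, y ∈ U) →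
    ∃ x ∈ U, ∀ y ∈ F, (x \ y).Finite

def IsRun (σ : List (Finset ℕ) → Set ℕ) (a : ℕ → Finset ℕ) : Prop :=
  (∀ n, (a n).Nonempty) ∧ ∀ n, (a n : Set ℕ) ⊆ σ (List.ofFn fun i : Fin n => a i)

namespace BlockRun

variable (f : List (Finset ℕ) → ℕ)

def listBound (N : ℕ) : ℕ :=
  (Finset.range (N + 1)).sup fun n =>
    (Fintype.piFinset fun _ : Fin n => (Finset.Iic N).powerset).sup fun v => f (List.ofFn v)

lemma le_listBound {n N : ℕ} (v : Fin n → Finset ℕ) (hn : n ≤ N)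
    (hv : ∀ i, ∀ t ∈ v i, t ≤ N) : f (List.ofFn v) ≤ listBound f N := by
  have hv' : v ∈ Fintype.piFinset fun _ : Fin n => (Finset.Iic N).powerset :=
    Fintype.mem_piFinset.2 fun i => Finset.mem_powerset.2 fun t ht => Finset.mem_Iic.2 (hv i t ht)
  exact (Finset.le_sup (f := fun v => f (List.ofFn v)) hv').trans
    (Finset.le_sup (f := fun n => (Fintype.piFinset fun _ : Fin n =>
      (Finset.Iic N).powerset).sup fun v => f (List.ofFn v))
      (Finset.mem_range.2 (Nat.lt_succ_of_le hn)))

variable (x : Set ℕ) (hx : x.Infinite)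

/-- Starting at `listBound f 0 ≥ f []` makes the first block of each parity an answer to `[]`. -/
noncomputable def cut : ℕ → ℕ
  | 0 => listBound f 0
  | n + 1 => (hx.exists_gt (max (cut n) (listBound f (cut n)))).choose

lemma cut_succ_spec (n : ℕ) : cut f x hx (n + 1) ∈ x ∧
    max (cut f x hx n) (listBound f (cut f x hx n)) < cut f x hx (n + 1) :=
  (hx.exists_gt _).choose_spec

lemma strictMono_cut : StrictMono (cut f x hx) :=
  strictMono_nat_of_lt_succ fun n => (max_lt_iff.1 (cut_succ_spec f x hx n).2).1

open Classical in
noncomputable def block (n : ℕ) : Finset ℕ :=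
  {t ∈ Finset.Ioc (cut f x hx n) (cut f x hx (n + 1)) | t ∈ x}

variable {f x hx}

lemma mem_block {n t : ℕ} :
    t ∈ block f x hx n ↔ (cut f x hx n < t ∧ t ≤ cut f x hx (n + 1)) ∧ t ∈ x := by
  simp [block]

lemma block_nonempty (n : ℕ) : (block f x hx n).Nonempty :=
  ⟨_, mem_block.2 ⟨⟨(strictMono_cut f x hx) n.lt_succ_self, le_rfl⟩, (cut_succ_spec f x hx n).1⟩⟩

lemma apply_ofFn_block_lt_cut_succ {k m : ℕ} (e : Fin k → ℕ) (hk : k ≤ m) (he : ∀ i, e i < m) :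
    f (List.ofFn fun i => block f x hx (e i)) < cut f x hx (m + 1) := by
  have hmono := strictMono_cut f x hx
  have hbound : f (List.ofFn fun i => block f x hx (e i)) ≤ listBound f (cut f x hx m) :=
    le_listBound f _ (hk.trans hmono.le_apply) fun i t ht =>
      (mem_block.1 ht).1.2.trans (hmono.monotone (he i))
  exact hbound.trans_lt (max_lt_iff.1 (cut_succ_spec f x hx m).2).2

lemma isRun_block (σ : List (Finset ℕ) → Set ℕ) (hσ : ∀ l, ∀ t ∈ x, f l < t → t ∈ σ l)
    (r : ℕ) : IsRun σ fun k => block f x hx (2 * k + r) := by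
  refine ⟨fun k => block_nonempty _, fun k t ht => ?_⟩
  obtain ⟨⟨hcut, -⟩, htx⟩ := mem_block.1 ht
  refine hσ _ t htx (lt_of_le_of_lt ?_ hcut)
  cases k with
  | zero =>
    exact (le_listBound f _ le_rfl fun i => i.elim0).trans ((strictMono_cut f x hx).monotone
      (Nat.zero_le _))
  | succ j =>
    have hidx : 2 * (j + 1) + r = 2 * j + r + 1 + 1 := by ring
    rw [hidx]
    exact (apply_ofFn_block_lt_cut_succ _ (by omega) fun i => by omega).le

lemma inter_Ioi_subset_iUnion_block :
    x ∩ Set.Ioi (cut f x hx 0) ⊆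
      (⋃ k, (block f x hx (2 * k + 0) : Set ℕ)) ∪ ⋃ k, (block f x hx (2 * k + 1) : Set ℕ) := by
  rintro t ⟨htx, ht⟩
  have hmono := strictMono_cut f x hx
  obtain ⟨n, hn⟩ := hmono.exists_between_of_tendsto_atTop hmono.tendsto_atTop ht
  have htn : t ∈ block f x hx n := mem_block.2 ⟨hn, htx⟩
  obtain ⟨k, rfl | rfl⟩ := Nat.even_or_odd' n
  · exact Or.inl (Set.mem_iUnion.2 ⟨k, htn⟩)
  · exact Or.inr (Set.mem_iUnion.2 ⟨k, htn⟩)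

end BlockRun

open BlockRun in
theorem exists_isRun_iUnion_mem_of_diff_finite {U : Ultrafilter ℕ} (hfree : IsFree U)
    {σ : List (Finset ℕ) → Set ℕ} {x : Set ℕ} (hxU : x ∈ U) (hσ : ∀ l, (x \ σ l).Finite) :
    ∃ a, IsRun σ a ∧ (⋃ n, (a n : Set ℕ)) ∈ U := by
  have hx : x.Infinite := fun hfin => Ultrafilter.compl_notMem_iff.2 hxU (hfree x hfin)
  have hbound : ∀ l, ∃ N, ∀ t ∈ x, N < t → t ∈ σ l := fun l => by
    obtain ⟨N, hN⟩ := (hσ l).bddAbove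
    exact ⟨N, fun t htx hNt => by_contra fun ht => (hN ⟨htx, ht⟩).not_gt hNt⟩
  choose f hf using hbound
  have hcofinite : Set.Ioi (cut f x hx 0) ∈ U := by
    simpa using hfree _ (Set.finite_Iic (cut f x hx 0))
  have hunion := U.mem_of_superset (Filter.inter_mem hxU hcofinite) inter_Ioi_subset_iUnion_block
  rcases Ultrafilter.union_mem_iff.1 hunion with h | h
  · exact ⟨_, isRun_block σ hf 0, h⟩
  · exact ⟨_, isRun_block σ hf 1, h⟩

lemma diff_finite_of_subset_biInter {a : ℕ → Set ℕ} {g : ℕ → Set ℕ} (ha : ∀ n, (a n).Finite)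
    (hag : ∀ n, a n ⊆ ⋂ j ∈ Set.Iic n, g j) (m : ℕ) : ((⋃ n, a n) \ g m).Finite := by
  refine ((Set.finite_Iio m).biUnion fun n _ => ha n).subset ?_
  rintro t ⟨ht, htm⟩
  obtain ⟨n, htn⟩ := Set.mem_iUnion.1 ht
  refine Set.mem_biUnion (Set.mem_Iio.2 (lt_of_not_ge fun hmn => htm ?_)) htn
  exact Set.mem_iInter₂.1 (hag n htn) m hmn

theorem IsPPoint.of_forall_exists_isRun {U : Ultrafilter ℕ}
    (h : ∀ σ : List (Finset ℕ) → Set ℕ, (∀ l, σ l ∈ U) →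
      ∃ a, IsRun σ a ∧ (⋃ n, (a n : Set ℕ)) ∈ U) : IsPPoint U := by
  intro F hFc hFU
  rcases F.eq_empty_or_nonempty with rfl | hne
  · exact ⟨Set.univ, Filter.univ_mem, by simp⟩
  obtain ⟨g, rfl⟩ := hFc.exists_eq_range hne
  obtain ⟨a, ⟨-, ha⟩, haU⟩ := h (fun l => ⋂ j ∈ Set.Iic l.length, g j)
    fun l => (Filter.biInter_mem (Set.finite_Iic _)).2 fun j _ => hFU _ ⟨j, rfl⟩
  refine ⟨_, haU, ?_⟩
  rintro _ ⟨m, rfl⟩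
  exact diff_finite_of_subset_biInter (fun n => (a n).finite_toSet)
    (fun n => by simpa using ha n) m

/-- A free ultrafilter `U` is a P-point iff Player I has no winning strategy in the
game `G(U)`: for every strategy `σ` for Player I (assigning to each finite sequence
of moves of Player II a set in `U`), there is a run `(a_n)` of nonempty finite sets
played according to `σ` whose union lies in `U`. -/
theorem ppoint_iff_no_winning_strategy (U : Ultrafilter ℕ) (hfree : IsFree U) :
    IsPPoint U ↔
      ∀ σ : List (Finset ℕ) → Set ℕ, (∀ l, σ l ∈ U) →
        ∃ a : ℕ → Finset ℕ, (∀ n, (a n).Nonempty) ∧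
          (∀ n, (↑(a n) : Set ℕ) ⊆ σ (List.ofFn fun i : Fin n => a i)) ∧
          (⋃ n, (a n : Set ℕ)) ∈ U := by
  refine ⟨fun hP σ hσ => ?_, fun h => IsPPoint.of_forall_exists_isRun fun σ hσ => ?_⟩
  · obtain ⟨x, hxU, hx⟩ := hP (Set.range σ) (Set.countable_range σ) (by
      rintro _ ⟨l, rfl⟩
      exact hσ l)
    obtain ⟨a, ⟨hne, hsub⟩, haU⟩ :=
      exists_isRun_iUnion_mem_of_diff_finite hfree hxU fun l => hx _ ⟨l, rfl⟩
    exact ⟨a, hne, hsub, haU⟩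
  · obtain ⟨a, hne, hsub, haU⟩ := h σ hσ
    exact ⟨a, ⟨hne, hsub⟩, haU⟩
end

section
/- Let 𝓕 be a family of collections of subsets of ℕ such that for each F ∈ 𝓕 there is a function f_F : ℕ → ℕ with: for every x ∈ F, for all but finitely many n, x ∩ [n, f_F(n)) ≠ ∅. Suppose there is a single strictly increasing function f : ℕ → ℕ with f(n) > n for all n which eventually dominates every f_F (i.e. for each F ∈ 𝓕, f_F(n) ≤ f(n) for all but finitely many n). Then there exist x₀, x₁ ⊆ ℕ with x₀ ∪ x₁ = ℕ such that neither x₀ nor x₁ belongs to ⋃𝓕; in particular ⋃𝓕 is not an ultrafilter on ℕ. (One may take x₀ = ⋃_n [f^{2n}(0), f^{2n+1}(0)) and x₁ = ⋃_n [f^{2n+1}(0), f^{2n+2}(0)), where f^k denotes k-fold iteration.) -/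
/-!
Let `a k = f^[k] 0`. Since `n < f n`, the blocks `[a k, a (k+1))` partition `ℕ`, and the
even and odd blocks give the cover `x₀ ∪ x₁ = ℕ`. If `x ∈ F ∈ 𝓕` then, as `f` eventually
dominates `f_F` and `a k → ∞`, `x` meets `[a k, f (a k)) = [a k, a (k+1))` for all large `k`.
But `x₀` misses every odd block and `x₁` every even block, so neither lies in `⋃ 𝓕`; and an
ultrafilter containing `x₀ ∪ x₁ = ℕ` would contain one of them.
-/

open Set Filter Function

section Blocks

variable {α : Type*} [Preorder α]

def evenBlocks (a : ℕ → α) : Set α := ⋃ n, Ico (a (2 * n)) (a (2 * n + 1))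

def oddBlocks (a : ℕ → α) : Set α := ⋃ n, Ico (a (2 * n + 1)) (a (2 * n + 2))

theorem evenBlocks_union_oddBlocks (a : ℕ → α) :
    evenBlocks a ∪ oddBlocks a = ⋃ k, Ico (a k) (a (k + 1)) := by
  ext y
  simp only [evenBlocks, oddBlocks, mem_union, mem_iUnion]
  constructor
  · rintro (⟨n, hn⟩ | ⟨n, hn⟩)
    exacts [⟨2 * n, hn⟩, ⟨2 * n + 1, hn⟩]
  · rintro ⟨k, hk⟩
    obtain ⟨n, rfl | rfl⟩ := Nat.even_or_odd' k
    exacts [Or.inl ⟨n, hk⟩, Or.inr ⟨n, hk⟩]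

variable {a : ℕ → α}

theorem Monotone.frequently_disjoint_evenBlocks_Ico (ha : Monotone a) :
    ∃ᶠ k in atTop, Disjoint (evenBlocks a) (Ico (a k) (a (k + 1))) := by
  refine frequently_atTop.2 fun N => ⟨2 * N + 1, by omega, ?_⟩
  refine disjoint_iUnion_left.2 fun n => ?_
  exact ha.pairwise_disjoint_on_Ico_succ (i := 2 * n) (by omega)

theorem Monotone.frequently_disjoint_oddBlocks_Ico (ha : Monotone a) :
    ∃ᶠ k in atTop, Disjoint (oddBlocks a) (Ico (a k) (a (k + 1))) := by
  refine frequently_atTop.2 fun N => ⟨2 * N, by omega, ?_⟩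
  refine disjoint_iUnion_left.2 fun n => ?_
  exact ha.pairwise_disjoint_on_Ico_succ (i := 2 * n + 1) (by omega)

end Blocks

theorem strictMono_iterate_of_forall_lt_map {α : Type*} [Preorder α] {f : α → α}
    (hf : ∀ x, x < f x) (x : α) : StrictMono fun k => f^[k] x :=
  strictMono_nat_of_lt_succ fun k => by
    simpa only [iterate_succ_apply'] using hf (f^[k] x)

theorem iUnion_Ico_iterate_zero_eq_univ {f : ℕ → ℕ} (hf : ∀ n, n < f n) :
    ⋃ k, Ico (f^[k] 0) (f^[k + 1] 0) = univ := by
  have ha := strictMono_iterate_of_forall_lt_map hf 0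
  exact (iUnion_Ico_map_succ_eq_Ici (fun k => ha.monotone (Nat.zero_le k))
    ha.not_bddAbove_range_of_wellFoundedLT).trans Ici_bot

theorem eventually_inter_Ico_iterate_nonempty {f g : ℕ → ℕ} (hf : ∀ n, n < f n) {x : Set ℕ}
    (hx : ∀ᶠ n in atTop, (x ∩ Ico n (g n)).Nonempty) (hg : ∀ᶠ n in atTop, g n ≤ f n) (m : ℕ) :
    ∀ᶠ k in atTop, (x ∩ Ico (f^[k] m) (f^[k + 1] m)).Nonempty := by
  have htend := (strictMono_iterate_of_forall_lt_map hf m).tendsto_atTop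
  filter_upwards [htend.eventually (hx.and hg)] with k ⟨hne, hle⟩
  rw [iterate_succ_apply']
  exact hne.mono (inter_subset_inter_right _ (Ico_subset_Ico_right hle))

theorem union_of_meager_filters_not_ultrafilter_general
    (𝓕 : Set (Set (Set ℕ))) (fF : Set (Set ℕ) → ℕ → ℕ)
    (hfF : ∀ F ∈ 𝓕, ∀ x ∈ F, ∀ᶠ n in Filter.atTop, (x ∩ Set.Ico n (fF F n)).Nonempty)
    (f : ℕ → ℕ) (hgt : ∀ n, n < f n)
    (hdom : ∀ F ∈ 𝓕, ∀ᶠ n in Filter.atTop, fF F n ≤ f n) :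
    (⋃ n : ℕ, Set.Ico (f^[2 * n] 0) (f^[2 * n + 1] 0)) ∪
      (⋃ n : ℕ, Set.Ico (f^[2 * n + 1] 0) (f^[2 * n + 2] 0)) = Set.univ ∧
    (⋃ n : ℕ, Set.Ico (f^[2 * n] 0) (f^[2 * n + 1] 0)) ∉ ⋃₀ 𝓕 ∧
    (⋃ n : ℕ, Set.Ico (f^[2 * n + 1] 0) (f^[2 * n + 2] 0)) ∉ ⋃₀ 𝓕 ∧
    ¬ ∃ U : Ultrafilter ℕ, ⋃₀ 𝓕 = {s : Set ℕ | s ∈ U} := by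
  set a : ℕ → ℕ := fun k => f^[k] 0
  have ha : Monotone a := (strictMono_iterate_of_forall_lt_map hgt 0).monotone
  have hcover : evenBlocks a ∪ oddBlocks a = univ := by
    rw [evenBlocks_union_oddBlocks]
    exact iUnion_Ico_iterate_zero_eq_univ hgt
  have hmeet : ∀ x ∈ ⋃₀ 𝓕, ∀ᶠ k in atTop, (x ∩ Ico (a k) (a (k + 1))).Nonempty := by
    rintro x ⟨F, hF, hxF⟩
    exact eventually_inter_Ico_iterate_nonempty hgt (hfF F hF x hxF) (hdom F hF) 0
  have hmiss : ∀ x, (∃ᶠ k in atTop, Disjoint x (Ico (a k) (a (k + 1)))) → x ∉ ⋃₀ 𝓕 :=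
    fun x hdisj hx =>
      have ⟨_, hdisj, hne⟩ := (hdisj.and_eventually (hmeet x hx)).exists
      not_disjoint_iff_nonempty_inter.2 hne hdisj
  have heven := hmiss _ ha.frequently_disjoint_evenBlocks_Ico
  have hodd := hmiss _ ha.frequently_disjoint_oddBlocks_Ico
  refine ⟨hcover, heven, hodd, ?_⟩
  rintro ⟨U, hU⟩
  rcases U.union_mem_iff.1 (hcover ▸ univ_mem) with h | h
  exacts [heven (hU ▸ h), hodd (hU ▸ h)]

/-- Talagrand-style argument: if every `F ∈ 𝓕` comes with a function `fF F` such
that every `x ∈ F` meets `[n, fF F n)` for all but finitely many `n`, and a single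
strictly increasing `f` with `f n > n` eventually dominates all the `fF F`, then
the two explicit sets `x₀ = ⋃ₙ [f^{2n}(0), f^{2n+1}(0))` and
`x₁ = ⋃ₙ [f^{2n+1}(0), f^{2n+2}(0))` cover `ℕ` and neither belongs to `⋃𝓕`;
in particular `⋃𝓕` is not an ultrafilter on `ℕ`. -/
theorem union_of_meager_filters_not_ultrafilter
    (𝓕 : Set (Set (Set ℕ))) (fF : Set (Set ℕ) → ℕ → ℕ)
    (hfF : ∀ F ∈ 𝓕, ∀ x ∈ F, ∀ᶠ n in Filter.atTop, (x ∩ Set.Ico n (fF F n)).Nonempty)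
    (f : ℕ → ℕ) (hmono : StrictMono f) (hgt : ∀ n, n < f n)
    (hdom : ∀ F ∈ 𝓕, ∀ᶠ n in Filter.atTop, fF F n ≤ f n) :
    (⋃ n : ℕ, Set.Ico (f^[2 * n] 0) (f^[2 * n + 1] 0)) ∪
      (⋃ n : ℕ, Set.Ico (f^[2 * n + 1] 0) (f^[2 * n + 2] 0)) = Set.univ ∧
    (⋃ n : ℕ, Set.Ico (f^[2 * n] 0) (f^[2 * n + 1] 0)) ∉ ⋃₀ 𝓕 ∧
    (⋃ n : ℕ, Set.Ico (f^[2 * n + 1] 0) (f^[2 * n + 2] 0)) ∉ ⋃₀ 𝓕 ∧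
    ¬ ∃ U : Ultrafilter ℕ, ⋃₀ 𝓕 = {s : Set ℕ | s ∈ U} :=
  union_of_meager_filters_not_ultrafilter_general 𝓕 fF hfF f hgt hdom
end
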